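/- arXiv:1301.0810 — 6 statements merged into one kernel-verified Lean document; each statement's English description precedes it below -/
import Mathlib

section
/- Let X be a finite-dimensional real normed space with dual X*, and let A ⊂ X be a nonempty closed set such that the recession cone P := (cl conv A)_∞ of the closed convex hull of A is pointed. Then int P⁻ = int(dom σ_A) ≠ ∅, the support function σ_A is continuous on int P⁻, and for every x* ∈ int P⁻ the subdifferential ∂σ_A(x*) is nonempty, convex and compact. -/
open Set Filter Topology Pointwise

variable {X : Type*} [NormedAddCommGroup X] [NormedSpace ℝ X]

/-- The support function `σ_A : X* → ℝ ∪ {+∞}`, `σ_A(x*) = sup {⟨a, x*⟩ : a ∈ A}`,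
taking values in `EReal`. -/
noncomputable def supportFn (A : Set X) (f : X →L[ℝ] ℝ) : EReal :=
  ⨆ a ∈ A, (f a : EReal)

/-- The recession cone `S_∞` of a set `S`. -/
def recessionCone (S : Set X) : Set X :=
  {u | ∃ t : ℕ → ℝ, (∀ n, 0 < t n) ∧ Tendsto t atTop (𝓝 0) ∧
       ∃ a : ℕ → X, (∀ n, a n ∈ S) ∧ Tendsto (fun n => t n • a n) atTop (𝓝 u)}

/-- The negative dual cone `P⁻ = {x* : ⟨x, x*⟩ ≤ 0 for all x ∈ P}`. -/
def negDual (P : Set X) : Set (X →L[ℝ] ℝ) := {f | ∀ x ∈ P, f x ≤ 0}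

/-- The subdifferential of the support function of `A` at `f`:
`{u : ⟨u, g - f⟩ ≤ σ_A(g) - σ_A(f) for all g}` (empty when `σ_A(f) = +∞`). -/
def subdiff (A : Set X) (f : X →L[ℝ] ℝ) : Set X :=
  {u | supportFn A f ≠ ⊤ ∧
       ∀ g : X →L[ℝ] ℝ, supportFn A f + ((g u - f u : ℝ) : EReal) ≤ supportFn A g}

/-!
Write `C` for the closed convex hull of `A` and `P = C_∞`. A functional `f` lies in `int P⁻`
exactly when it is negative on `P \ {0}`; for such `f` every superlevel set `C ∩ {c ≤ f}` has
recession cone inside `P ∩ {0 ≤ f} = {0}`, hence is compact. So `σ_A(f)` is finite and attained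
on `C`, and `∂σ_A(f)` is the face of `C` exposed by `f`, a compact convex set. Pointedness gives,
for each unit vector `u ∈ P`, a functional of `P⁻` negative at `u` (separate `-u` from `P`);
summing finitely many of them over the compact set of unit vectors of `P` yields an interior
point of `P⁻`. Continuity holds because a finite convex function on an open subset of a
finite-dimensional space is continuous.
-/

section RecessionCone

lemma recessionCone_mono {S T : Set X} (h : S ⊆ T) : recessionCone S ⊆ recessionCone T := by
  rintro u ⟨t, htp, ht0, a, haS, hta⟩
  exact ⟨t, htp, ht0, a, fun n => h (haS n), hta⟩

lemma apply_nonpos_of_mem_recessionCone {S : Set X} {f : X →L[ℝ] ℝ} {M : ℝ}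
    (hM : ∀ x ∈ S, f x ≤ M) {v : X} (hv : v ∈ recessionCone S) : f v ≤ 0 := by
  obtain ⟨t, htp, ht0, a, haS, hta⟩ := hv
  have hlim : Tendsto (fun n => t n * f (a n)) atTop (𝓝 (f v)) := by
    simpa [Function.comp_def] using (f.continuous.tendsto v).comp hta
  refine le_of_tendsto_of_tendsto' hlim (by simpa using ht0.mul_const M) fun n => ?_
  exact mul_le_mul_of_nonneg_left (hM _ (haS n)) (htp n).le

lemma isBounded_of_recessionCone_subset_zero [FiniteDimensional ℝ X] {S : Set X}
    (h : recessionCone S ⊆ {0}) : Bornology.IsBounded S := by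
  by_contra hS
  rw [isBounded_iff_forall_norm_le] at hS
  push Not at hS
  choose b hbS hb using fun n : ℕ => hS n
  have hpos : ∀ n, 0 < ‖b n‖ := fun n => (Nat.cast_nonneg n).trans_lt (hb n)
  have hunit : ∀ n, ‖b n‖⁻¹ • b n ∈ Metric.sphere (0 : X) 1 := fun n => by
    simp [norm_smul, (hpos n).ne']
  obtain ⟨v, hv, φ, hφ, hlim⟩ := (isCompact_sphere (0 : X) 1).tendsto_subseq hunit
  have hnorm : Tendsto (fun n => ‖b (φ n)‖) atTop atTop :=
    tendsto_atTop_mono (fun n => (hb (φ n)).le)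
      (tendsto_natCast_atTop_atTop.comp hφ.tendsto_atTop)
  have hv0 : v = 0 :=
    h ⟨_, fun n => inv_pos.2 (hpos _), hnorm.inv_tendsto_atTop, _, fun n => hbS _, hlim⟩
  simp [hv0] at hv

section NegOnRecessionCone

variable [FiniteDimensional ℝ X] {S : Set X} {f : X →L[ℝ] ℝ}

lemma isBounded_inter_le_of_neg_on_recessionCone
    (hf : ∀ v ∈ recessionCone S, v ≠ 0 → f v < 0) (c : ℝ) :
    Bornology.IsBounded (S ∩ {x | c ≤ f x}) := by
  refine isBounded_of_recessionCone_subset_zero fun v hv => ?_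
  by_contra hv0
  have hfv : (-f) v ≤ 0 :=
    apply_nonpos_of_mem_recessionCone (M := -c) (fun x hx => by simpa using hx.2) hv
  exact (hf v (recessionCone_mono inter_subset_left hv) hv0).not_ge (by simpa using hfv)

lemma bddAbove_image_of_neg_on_recessionCone
    (hf : ∀ v ∈ recessionCone S, v ≠ 0 → f v < 0) : BddAbove (f '' S) := by
  obtain ⟨M, hM⟩ :=
    (f.lipschitz.isBounded_image (isBounded_inter_le_of_neg_on_recessionCone hf 0)).bddAbove
  refine ⟨max M 0, forall_mem_image.2 fun x hx => ?_⟩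
  rcases le_or_gt 0 (f x) with h | h
  · exact (hM (mem_image_of_mem f ⟨hx, h⟩)).trans (le_max_left _ _)
  · exact h.le.trans (le_max_right _ _)

lemma exists_isMaxOn_of_neg_on_recessionCone (hS : IsClosed S) {x₀ : X} (hx₀ : x₀ ∈ S)
    (hf : ∀ v ∈ recessionCone S, v ≠ 0 → f v < 0) : ∃ x ∈ S, IsMaxOn f S x := by
  have hT : IsCompact (S ∩ {x | f x₀ ≤ f x}) := Metric.isCompact_of_isClosed_isBounded
    (hS.inter (isClosed_le continuous_const f.continuous))
    (isBounded_inter_le_of_neg_on_recessionCone hf _)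
  obtain ⟨x, hxT, hmax⟩ := hT.exists_isMaxOn ⟨x₀, hx₀, le_refl (f x₀)⟩ f.continuous.continuousOn
  refine ⟨x, hxT.1, isMaxOn_iff.2 fun y hy => ?_⟩
  rcases le_or_gt (f x₀) (f y) with h | h
  · exact hmax ⟨hy, h⟩
  · exact h.le.trans (hmax ⟨hx₀, le_refl (f x₀)⟩)

end NegOnRecessionCone

lemma mem_recessionCone_iff {C : Set X} (hC : IsClosed C) (hCv : Convex ℝ C) {x₀ : X}
    (hx₀ : x₀ ∈ C) {u : X} : u ∈ recessionCone C ↔ ∀ s : ℝ, 0 ≤ s → x₀ + s • u ∈ C := by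
  constructor
  · rintro ⟨t, htp, ht0, a, haC, hta⟩ s hs
    have hst : Tendsto (fun n => s * t n) atTop (𝓝 0) := by simpa using ht0.const_mul s
    have hlim : Tendsto (fun n => (1 - s * t n) • x₀ + (s * t n) • a n) atTop
        (𝓝 (x₀ + s • u)) := by
      convert ((tendsto_const_nhds (x := x₀)).sub (hst.smul_const x₀)).add (hta.const_smul s)
        using 2 with n
      · simp only [sub_smul, one_smul, mul_smul]
      · simp
    refine hC.mem_of_tendsto hlim ?_
    filter_upwards [hst.eventually_lt_const one_pos] with n hn
    exact hCv hx₀ (haC n) (by linarith) (mul_nonneg hs (htp n).le) (by ring)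
  · intro h
    have hn : Tendsto (fun n : ℕ => (n : ℝ) + 1) atTop atTop :=
      tendsto_atTop_add_const_right _ 1 tendsto_natCast_atTop_atTop
    have hinv : Tendsto (fun n : ℕ => ((n : ℝ) + 1)⁻¹) atTop (𝓝 0) := hn.inv_tendsto_atTop
    refine ⟨fun n => ((n : ℝ) + 1)⁻¹, fun n => by positivity, hinv,
      fun n => x₀ + ((n : ℝ) + 1) • u, fun n => h _ (by positivity), ?_⟩
    convert (hinv.smul_const x₀).add_const u using 2 with n
    · rw [smul_add, smul_smul, inv_mul_cancel₀ (by positivity), one_smul]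
    · simp

lemma smul_mem_recessionCone {C : Set X} (hC : IsClosed C) (hCv : Convex ℝ C) {x₀ : X}
    (hx₀ : x₀ ∈ C) {c : ℝ} (hc : 0 ≤ c) {u : X} (hu : u ∈ recessionCone C) :
    c • u ∈ recessionCone C := by
  rw [mem_recessionCone_iff hC hCv hx₀] at hu ⊢
  intro s hs
  rw [smul_smul]
  exact hu _ (mul_nonneg hs hc)

lemma convex_recessionCone {C : Set X} (hC : IsClosed C) (hCv : Convex ℝ C) {x₀ : X}
    (hx₀ : x₀ ∈ C) : Convex ℝ (recessionCone C) := by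
  intro u hu v hv p q hp hq hpq
  rw [mem_recessionCone_iff hC hCv hx₀] at hu hv ⊢
  intro s hs
  convert hCv (hu s hs) (hv s hs) hp hq hpq using 1
  obtain rfl : q = 1 - p := by linarith
  module

lemma isClosed_recessionCone {C : Set X} (hC : IsClosed C) (hCv : Convex ℝ C) {x₀ : X}
    (hx₀ : x₀ ∈ C) : IsClosed (recessionCone C) := by
  have h : recessionCone C = ⋂ s ∈ Ici (0 : ℝ), (fun u => x₀ + s • u) ⁻¹' C := by
    ext u
    simp [mem_recessionCone_iff hC hCv hx₀]
  rw [h]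
  exact isClosed_biInter fun s _ => hC.preimage (continuous_const.add (continuous_const_smul s))

end RecessionCone

section NegDual

variable {P : Set X}

lemma apply_neg_of_mem_interior_negDual {f : X →L[ℝ] ℝ} (hf : f ∈ interior (negDual P))
    {u : X} (hu : u ∈ P) (hu0 : u ≠ 0) : f u < 0 := by
  obtain ⟨ε, hε, hball⟩ := Metric.isOpen_iff.1 isOpen_interior f hf
  obtain ⟨g, hg1, hgu⟩ := exists_dual_vector ℝ u (norm_ne_zero_iff.2 hu0)
  have hmem : f + (ε / 2) • g ∈ Metric.ball f ε := by
    rw [Metric.mem_ball, dist_eq_norm, add_sub_cancel_left, norm_smul, hg1, mul_one,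
      Real.norm_of_nonneg (by positivity)]
    exact half_lt_self hε
  have h := interior_subset (hball hmem) u hu
  have hpos : 0 < ε / 2 * ‖u‖ := by positivity
  simp only [add_apply, smul_apply, smul_eq_mul, hgu, RCLike.ofReal_real_eq_id, id] at h
  linarith

lemma exists_mem_negDual_apply_neg (hPc : IsClosed P) (hPv : Convex ℝ P)
    (hPsmul : ∀ c : ℝ, 0 ≤ c → ∀ u ∈ P, c • u ∈ P) {u : X} (hu : u ∈ P) (hnu : -u ∉ P) :
    ∃ f ∈ negDual P, f u < 0 := by
  obtain ⟨f, r, hfP, hr⟩ := geometric_hahn_banach_closed_point hPv hPc hnu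
  have hr0 : 0 < r := by simpa using hfP _ (hPsmul 0 le_rfl u hu)
  refine ⟨f, fun x hx => ?_, by simpa using hr0.trans hr⟩
  by_contra! hpos
  have h := hfP _ (hPsmul (r / f x) (by positivity) x hx)
  rw [map_smul, smul_eq_mul, div_mul_cancel₀ _ hpos.ne'] at h
  exact h.false

lemma exists_mem_negDual_forall_neg {K : Set X} (hK : IsCompact K) (hKP : K ⊆ P)
    (h : ∀ u ∈ K, ∃ f ∈ negDual P, f u < 0) : ∃ f ∈ negDual P, ∀ u ∈ K, f u < 0 := by
  choose g hgP hgu using fun u : K => h u u.2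
  obtain ⟨t, ht⟩ := hK.elim_finite_subcover (fun u => {x | g u x < 0})
    (fun u => isOpen_lt (g u).continuous continuous_const)
    fun u hu => mem_iUnion.2 ⟨⟨u, hu⟩, hgu _⟩
  refine ⟨∑ i ∈ t, g i, fun x hx => ?_, fun x hx => ?_⟩
  · rw [sum_apply]
    exact Finset.sum_nonpos fun i _ => hgP i x hx
  · obtain ⟨i, hit, hxi⟩ := mem_iUnion₂.1 (ht hx)
    rw [sum_apply, ← Finset.sum_const_zero (s := t)]
    exact Finset.sum_lt_sum (fun j _ => hgP j x (hKP hx)) ⟨i, hit, hxi⟩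

lemma mem_interior_negDual_of_forall_neg (hPsmul : ∀ c : ℝ, 0 ≤ c → ∀ u ∈ P, c • u ∈ P)
    {f : X →L[ℝ] ℝ} (hK : IsCompact (P ∩ Metric.sphere 0 1))
    (hf : ∀ u ∈ P ∩ Metric.sphere 0 1, f u < 0) : f ∈ interior (negDual P) := by
  obtain ⟨ε, hε, hfε⟩ := hK.exists_forall_le' (f := fun u => -f u)
    f.continuous.neg.continuousOn (a := 0) fun u hu => neg_pos.2 (hf u hu)
  refine mem_interior.2 ⟨Metric.ball f ε, fun g hg u hu => ?_, Metric.isOpen_ball,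
    Metric.mem_ball_self hε⟩
  rcases eq_or_ne u 0 with rfl | hu0
  · simp
  have hw : ‖u‖⁻¹ • u ∈ P ∩ Metric.sphere 0 1 :=
    ⟨hPsmul _ (by positivity) u hu, by simp [norm_smul, hu0]⟩
  have hgf : (g - f) (‖u‖⁻¹ • u) < ε := calc
    (g - f) (‖u‖⁻¹ • u) ≤ ‖g - f‖ * ‖‖u‖⁻¹ • u‖ := (le_abs_self _).trans ((g - f).le_opNorm _)
    _ = ‖g - f‖ := by rw [mem_sphere_zero_iff_norm.1 hw.2, mul_one]
    _ < ε := by rwa [Metric.mem_ball, dist_eq_norm] at hg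
  have hgw : g (‖u‖⁻¹ • u) ≤ 0 := by
    have := hfε _ hw
    simp only [sub_apply] at hgf
    linarith
  calc g u = ‖u‖ * g (‖u‖⁻¹ • u) := by
        rw [map_smul, smul_eq_mul, ← mul_assoc, mul_inv_cancel₀ (norm_ne_zero_iff.2 hu0), one_mul]
    _ ≤ 0 := mul_nonpos_of_nonneg_of_nonpos (norm_nonneg u) hgw

lemma interior_negDual_nonempty [FiniteDimensional ℝ X] (hPc : IsClosed P) (hPv : Convex ℝ P)
    (hPsmul : ∀ c : ℝ, 0 ≤ c → ∀ u ∈ P, c • u ∈ P) (hpointed : P ∩ -P = {0}) :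
    (interior (negDual P)).Nonempty := by
  have hK : IsCompact (P ∩ Metric.sphere 0 1) := (isCompact_sphere 0 1).inter_left hPc
  obtain ⟨f, -, hf⟩ := exists_mem_negDual_forall_neg hK inter_subset_left fun u hu =>
    exists_mem_negDual_apply_neg hPc hPv hPsmul hu.1 fun hnu => by
      have hu0 : u ∈ P ∩ -P := ⟨hu.1, mem_neg.2 hnu⟩
      rw [hpointed] at hu0
      simp [mem_singleton_iff.1 hu0] at hu
  exact ⟨f, mem_interior_negDual_of_forall_neg hPsmul hK hf⟩

end NegDual

section SupportFunction

variable {A : Set X}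

lemma supportFn_eq_coe_sSup (hA : A.Nonempty) {f : X →L[ℝ] ℝ} (hf : BddAbove (f '' A)) :
    supportFn A f = (sSup (f '' A) : ℝ) := by
  rw [supportFn, ← sSup_image, ← image_image (fun r : ℝ => (r : EReal)) f]
  exact (Monotone.map_csSup_of_continuousAt continuous_coe_real_ereal.continuousAt
    (fun _ _ => EReal.coe_le_coe_iff.2) (hA.image f) hf).symm

lemma supportFn_lt_top_iff (hA : A.Nonempty) {f : X →L[ℝ] ℝ} :
    supportFn A f < ⊤ ↔ BddAbove (f '' A) := by
  refine ⟨fun h => ?_, fun h => supportFn_eq_coe_sSup hA h ▸ EReal.coe_lt_top _⟩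
  by_contra hf
  refine h.ne ((EReal.eq_top_iff_forall_lt _).2 fun r => ?_)
  obtain ⟨_, ⟨a, ha, rfl⟩, hra⟩ := not_bddAbove_iff.1 hf r
  exact (EReal.coe_lt_coe_iff.2 hra).trans_le (le_iSup₂_of_le a ha le_rfl)

lemma apply_le_of_mem_closure_convexHull {f : X →L[ℝ] ℝ} {M : ℝ} (hM : ∀ a ∈ A, f a ≤ M)
    {c : X} (hc : c ∈ closure (convexHull ℝ A)) : f c ≤ M :=
  closure_minimal (convexHull_min hM (convex_halfSpace_le f.toLinearMap.isLinear M))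
    (isClosed_le f.continuous continuous_const) hc

lemma setOf_supportFn_lt_top_subset_negDual (hA : A.Nonempty) :
    {f | supportFn A f < ⊤} ⊆ negDual (recessionCone (closure (convexHull ℝ A))) :=
  fun f hf _ => apply_nonpos_of_mem_recessionCone fun _ => apply_le_of_mem_closure_convexHull
    fun _ ha => le_csSup ((supportFn_lt_top_iff hA).1 hf) (mem_image_of_mem f ha)

lemma convexOn_sSup_image (hA : A.Nonempty) :
    ConvexOn ℝ {f : X →L[ℝ] ℝ | BddAbove (f '' A)} fun f => sSup (f '' A) := by
  have key : ∀ f g : X →L[ℝ] ℝ, BddAbove (f '' A) → BddAbove (g '' A) → ∀ p q : ℝ, 0 ≤ p →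
      0 ≤ q → ∀ a ∈ A, (p • f + q • g) a ≤ p * sSup (f '' A) + q * sSup (g '' A) :=
    fun f g hf hg p q hp hq a ha => by
      simp only [add_apply, smul_apply, smul_eq_mul]
      exact add_le_add (mul_le_mul_of_nonneg_left (le_csSup hf (mem_image_of_mem f ha)) hp)
        (mul_le_mul_of_nonneg_left (le_csSup hg (mem_image_of_mem g ha)) hq)
  exact ⟨fun f hf g hg p q hp hq _ => ⟨_, forall_mem_image.2 (key f g hf hg p q hp hq)⟩,
    fun f hf g hg p q hp hq _ =>
      csSup_le (hA.image _) (forall_mem_image.2 (key f g hf hg p q hp hq))⟩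

lemma continuousOn_supportFn [FiniteDimensional ℝ X] (hA : A.Nonempty) :
    ContinuousOn (supportFn A) (interior {f | supportFn A f < ⊤}) := by
  set D := {f : X →L[ℝ] ℝ | BddAbove (f '' A)}
  have hdom : {f | supportFn A f < ⊤} = D := Set.ext fun f => supportFn_lt_top_iff hA
  rw [hdom]
  refine (continuous_coe_real_ereal.comp_continuousOn
    (convexOn_sSup_image hA).continuousOn_interior).congr fun f hf => ?_
  exact supportFn_eq_coe_sSup hA (interior_subset (s := D) hf)

lemma subdiff_eq (hA : A.Nonempty) {f : X →L[ℝ] ℝ} (hf : BddAbove (f '' A)) :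
    subdiff A f = closure (convexHull ℝ A) ∩ {u | f u = sSup (f '' A)} := by
  set M := sSup (f '' A)
  have hσf : supportFn A f = M := supportFn_eq_coe_sSup hA hf
  have hMA : ∀ a ∈ A, f a ≤ M := fun a ha => le_csSup hf (mem_image_of_mem f ha)
  ext u
  constructor
  · rintro ⟨-, hsub⟩
    have hu : u ∈ closure (convexHull ℝ A) := by
      -- otherwise a functional `g` separating `u` from the hull breaks the inequality at `f + g`
      by_contra hu
      obtain ⟨g, s, hgA, hgu⟩ :=
        geometric_hahn_banach_closed_point (convex_convexHull ℝ A).closure isClosed_closure hu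
      have hfg : supportFn A (f + g) ≤ ((M + s : ℝ) : EReal) := iSup₂_le fun a ha =>
        EReal.coe_le_coe_iff.2 (add_le_add (hMA a ha)
          (hgA a (subset_closure (subset_convexHull ℝ A ha))).le)
      have h := (hsub (f + g)).trans hfg
      rw [hσf, ← EReal.coe_add, EReal.coe_le_coe_iff] at h
      simp only [add_apply, add_sub_cancel_left] at h
      linarith
    refine ⟨hu, le_antisymm (apply_le_of_mem_closure_convexHull hMA hu) ?_⟩
    have h0 : supportFn A 0 ≤ ((0 : ℝ) : EReal) := iSup₂_le fun a _ => by simp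
    have h := (hsub 0).trans h0
    rw [hσf, ← EReal.coe_add, EReal.coe_le_coe_iff] at h
    simp only [zero_apply, zero_sub] at h
    linarith
  · rintro ⟨hu, hfu⟩
    refine ⟨hσf ▸ EReal.coe_ne_top M, fun g => ?_⟩
    rcases eq_top_or_lt_top (supportFn A g) with hg | hg
    · exact hg ▸ le_top
    rw [supportFn_lt_top_iff hA] at hg
    rw [hσf, supportFn_eq_coe_sSup hA hg, ← EReal.coe_add, EReal.coe_le_coe_iff, hfu,
      add_sub_cancel]
    exact apply_le_of_mem_closure_convexHull (fun a ha => le_csSup hg (mem_image_of_mem g ha)) hu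

lemma subdiff_nonempty_convex_compact [FiniteDimensional ℝ X] (hA : A.Nonempty)
    {f : X →L[ℝ] ℝ} (hf : ∀ v ∈ recessionCone (closure (convexHull ℝ A)), v ≠ 0 → f v < 0) :
    (subdiff A f).Nonempty ∧ Convex ℝ (subdiff A f) ∧ IsCompact (subdiff A f) := by
  set C := closure (convexHull ℝ A)
  have hAC : A ⊆ C := (subset_convexHull ℝ A).trans subset_closure
  have hbdd : BddAbove (f '' A) :=
    bddAbove_image_of_neg_on_recessionCone fun v hv => hf v (recessionCone_mono hAC hv)
  rw [subdiff_eq hA hbdd]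
  obtain ⟨a₀, ha₀⟩ := hA
  obtain ⟨u, huC, hmax⟩ := exists_isMaxOn_of_neg_on_recessionCone isClosed_closure (hAC ha₀) hf
  refine ⟨⟨u, huC, le_antisymm ?_ ?_⟩, ?_, ?_⟩
  · exact apply_le_of_mem_closure_convexHull (fun a ha => le_csSup hbdd (mem_image_of_mem f ha)) huC
  · exact csSup_le ⟨_, mem_image_of_mem f ha₀⟩ (forall_mem_image.2 fun a ha => hmax (hAC ha))
  · exact (convex_convexHull ℝ A).closure.inter (convex_hyperplane f.toLinearMap.isLinear _)
  · exact Metric.isCompact_of_isClosed_isBounded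
      (isClosed_closure.inter (isClosed_eq f.continuous continuous_const))
      ((isBounded_inter_le_of_neg_on_recessionCone hf _).subset fun x hx => ⟨hx.1, hx.2.ge⟩)

end SupportFunction

theorem stmt0_general [FiniteDimensional ℝ X]
    (A : Set X) (hA : A.Nonempty)
    (P : Set X) (hP : P = recessionCone (closure (convexHull ℝ A)))
    (hpointed : P ∩ (-P) = {0}) :
    interior (negDual P) = interior {f : X →L[ℝ] ℝ | supportFn A f < ⊤} ∧
    (interior (negDual P)).Nonempty ∧
    ContinuousOn (supportFn A) (interior (negDual P)) ∧
    ∀ f ∈ interior (negDual P),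
      (subdiff A f).Nonempty ∧ Convex ℝ (subdiff A f) ∧ IsCompact (subdiff A f) := by
  subst hP
  set C := closure (convexHull ℝ A)
  have hAC : A ⊆ C := (subset_convexHull ℝ A).trans subset_closure
  have hCc : IsClosed C := isClosed_closure
  have hCv : Convex ℝ C := (convex_convexHull ℝ A).closure
  have hx₀ : hA.some ∈ C := hAC hA.some_mem
  have hbdd : ∀ f ∈ interior (negDual (recessionCone C)), BddAbove (f '' A) := fun f hf =>
    bddAbove_image_of_neg_on_recessionCone fun _ hv =>
      apply_neg_of_mem_interior_negDual hf (recessionCone_mono hAC hv)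
  have hint : interior (negDual (recessionCone C)) = interior {f | supportFn A f < ⊤} :=
    (interior_maximal (fun f hf => (supportFn_lt_top_iff hA).2 (hbdd f hf))
      isOpen_interior).antisymm (interior_mono (setOf_supportFn_lt_top_subset_negDual hA))
  refine ⟨hint, ?_, hint ▸ continuousOn_supportFn hA, fun f hf =>
    subdiff_nonempty_convex_compact hA fun _ => apply_neg_of_mem_interior_negDual hf⟩
  exact interior_negDual_nonempty (isClosed_recessionCone hCc hCv hx₀)
    (convex_recessionCone hCc hCv hx₀) (fun _ hc _ => smul_mem_recessionCone hCc hCv hx₀ hc)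
    hpointed

/-- For a nonempty closed set `A` in a nontrivial finite-dimensional real
normed space whose closed convex hull has a pointed recession cone `P`, one has
`int P⁻ = int (dom σ_A) ≠ ∅`, `σ_A` is continuous on `int P⁻`, and at every point of
`int P⁻` the subdifferential of `σ_A` is nonempty, convex and compact. -/
theorem stmt0 [FiniteDimensional ℝ X] [Nontrivial X]
    (A : Set X) (hA : A.Nonempty) (hAclosed : IsClosed A)
    (P : Set X) (hP : P = recessionCone (closure (convexHull ℝ A)))
    (hpointed : P ∩ (-P) = {0}) :
    interior (negDual P) = interior {f : X →L[ℝ] ℝ | supportFn A f < ⊤} ∧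
    (interior (negDual P)).Nonempty ∧
    ContinuousOn (supportFn A) (interior (negDual P)) ∧
    ∀ f ∈ interior (negDual P),
      (subdiff A f).Nonempty ∧ Convex ℝ (subdiff A f) ∧ IsCompact (subdiff A f) :=
  stmt0_general A hA P hP hpointed
end

section
/- Let X be a finite-dimensional real normed space with dual X*, and let A ⊂ X be a nonempty closed set such that the recession cone P := (cl conv A)_∞ of the closed convex hull of A is pointed. Then for every x* ∈ int P⁻ one has ∂σ_A(x*) = conv W_A(x*) ⊂ conv A, where W_A(x*) := {a ∈ A : ⟨a, x*⟩ = σ_A(x*)}. -/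
open Set Filter Topology Pointwise

variable {X : Type*} [NormedAddCommGroup X] [NormedSpace ℝ X]

/-- The set `W_A(x*) = {a ∈ A : ⟨a, x*⟩ = σ_A(x*)}`. -/
def Wset (A : Set X) (f : X →L[ℝ] ℝ) : Set X := {a ∈ A | (f a : EReal) = supportFn A f}

/-!
A functional `f ∈ int P⁻` is strictly negative on `P \ {0}`; since the directions `a / ‖a‖` of
points of `A` escaping to infinity accumulate in `P`, compactness of the unit sphere makes `f`
decay linearly along `A`. Hence `σ_A(f)` is attained, `W_A(f)` is compact, and so is its convex
hull (Carathéodory). Every point of `conv W_A(f)` is a subgradient. Conversely, separate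
`u ∉ conv W_A(f)` from it by `h`, with `h < c < h u` on `conv W_A(f)`: on `{a ∈ A | c ≤ h a}`
the gap `σ_A(f) - f a` is at least a multiple of `‖a‖ + 1`, so for small `t > 0` the tilted
functional satisfies `σ_A(f + t h) ≤ σ_A(f) + t c < σ_A(f) + t h u`, contradicting the
subgradient inequality at `u`.
-/

theorem IsCompact.convexHull {E : Type*} [AddCommGroup E] [Module ℝ E] [TopologicalSpace E]
    [IsTopologicalAddGroup E] [ContinuousSMul ℝ E] [FiniteDimensional ℝ E] {W : Set E}
    (hW : IsCompact W) : IsCompact (convexHull ℝ W) := by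
  rcases W.eq_empty_or_nonempty with rfl | ⟨w₀, hw₀⟩
  · simp
  set n := Module.finrank ℝ E + 1
  -- Carathéodory: every point of the hull is a convex combination of `n` points of `W`.
  suffices _root_.convexHull ℝ W = (fun p : (Fin n → ℝ) × (Fin n → E) => ∑ i, p.1 i • p.2 i) ''
      (stdSimplex ℝ (Fin n) ×ˢ univ.pi fun _ => W) by
    rw [this]
    exact ((isCompact_stdSimplex ℝ _).prod (isCompact_univ_pi fun _ => hW)).image (by fun_prop)
  refine Subset.antisymm (fun x hx => ?_) ?_
  · obtain ⟨ι, _, z, w, hzW, hz, hw0, hw1, rfl⟩ := eq_pos_convex_span_of_mem_convexHull hx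
    obtain ⟨e⟩ : Nonempty (ι ↪ Fin n) := Function.Embedding.nonempty_of_card_le <| by
      simpa using hz.card_le_finrank_succ.trans (Nat.succ_le_succ (Submodule.finrank_le _))
    have hoff : ∀ i ∉ range e, Function.extend e w 0 i = 0 := fun i hi =>
      Function.extend_apply' _ _ _ (by simpa using hi)
    refine ⟨(Function.extend e w 0, Function.extend e z fun _ => w₀), ⟨⟨fun i => ?_, ?_⟩, ?_⟩, ?_⟩
    · by_cases hi : ∃ j, e j = i
      · obtain ⟨j, rfl⟩ := hi
        simpa [e.injective.extend_apply] using (hw0 j).le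
      · simp [Function.extend_apply' _ _ _ hi]
    · rw [← hw1]
      exact (Fintype.sum_of_injective e e.injective _ _ hoff fun j => by
        simp [e.injective.extend_apply]).symm
    · intro i _
      by_cases hi : ∃ j, e j = i
      · obtain ⟨j, rfl⟩ := hi
        simpa [e.injective.extend_apply] using hzW (mem_range_self j)
      · simpa [Function.extend_apply' _ _ _ hi] using hw₀
    · exact (Fintype.sum_of_injective e e.injective _ _ (fun i hi => by simp [hoff i hi])
        fun j => by simp [e.injective.extend_apply]).symm
  · rintro _ ⟨⟨l, v⟩, ⟨hl, hv⟩, rfl⟩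
    exact (convex_convexHull ℝ W).sum_mem (fun i _ => hl.1 i) hl.2
      fun i _ => subset_convexHull ℝ W (hv i (mem_univ i))

section SupportFn

variable {A : Set X} {f g : X →L[ℝ] ℝ}

theorem supportFn_le_coe_iff {c : ℝ} : supportFn A g ≤ c ↔ ∀ a ∈ A, g a ≤ c := by
  simp only [supportFn, iSup₂_le_iff, EReal.coe_le_coe_iff]

theorem supportFn_eq_of_isMaxOn {m : X} (hm : m ∈ A) (hmax : IsMaxOn g A m) :
    supportFn A g = g m :=
  le_antisymm (supportFn_le_coe_iff.2 hmax) (le_iSup₂_of_le m hm le_rfl)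

theorem Wset_eq_of_supportFn_eq {s : ℝ} (hs : supportFn A f = s) :
    Wset A f = {a ∈ A | f a = s} := by
  simp [Wset, hs]

theorem mem_subdiff_iff {s : ℝ} (hs : supportFn A f = s) {u : X} :
    u ∈ subdiff A f ↔
      ∀ (g : X →L[ℝ] ℝ) (c : ℝ), (∀ a ∈ A, g a ≤ c) → s + (g u - f u) ≤ c := by
  simp only [subdiff, hs, ne_eq, EReal.coe_ne_top, not_false_eq_true, true_and, ← EReal.coe_add]
  refine forall_congr' fun g => ⟨fun h c hc => ?_, fun h => ?_⟩
  · exact EReal.coe_le_coe_iff.1 (h.trans (supportFn_le_coe_iff.2 hc))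
  · exact EReal.le_of_forall_lt_iff_le.1 fun c hc =>
      EReal.coe_le_coe_iff.2 (h c (supportFn_le_coe_iff.1 hc.le))

theorem convexHull_Wset_subset_subdiff {s : ℝ} (hs : supportFn A f = s) :
    convexHull ℝ (Wset A f) ⊆ subdiff A f := by
  refine convexHull_min (fun a ha => (mem_subdiff_iff hs).2 fun g c hc => ?_) ?_
  · rw [Wset_eq_of_supportFn_eq hs] at ha
    linarith [hc a ha.1, ha.2]
  · intro u hu v hv a b ha hb hab
    rw [mem_subdiff_iff hs] at hu hv ⊢
    intro g c hc
    have hu := hu g c hc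
    have hv := hv g c hc
    simp only [map_add, map_smul, smul_eq_mul]
    linear_combination a * hu + b * hv + (c - s) * hab

end SupportFn

def DecaysLinearlyOn {E : Type*} [SeminormedAddCommGroup E] (φ : E → ℝ) (S : Set E) : Prop :=
  ∃ r > 0, ∃ R, ∀ a ∈ S, R ≤ ‖a‖ → φ a ≤ -(r * ‖a‖)

namespace DecaysLinearlyOn

variable {E : Type*} [SeminormedAddCommGroup E] {φ : E → ℝ} {S : Set E}

theorem mono {T : Set E} (h : DecaysLinearlyOn φ T) (hST : S ⊆ T) : DecaysLinearlyOn φ S :=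
  let ⟨r, hr, R, hR⟩ := h
  ⟨r, hr, R, fun a ha => hR a (hST ha)⟩

theorem isBounded_superlevel (h : DecaysLinearlyOn φ S) (c : ℝ) :
    Bornology.IsBounded {a ∈ S | c ≤ φ a} := by
  obtain ⟨r, hr, R, hR⟩ := h
  refine (Metric.isBounded_closedBall (x := 0) (r := max R (|c| / r))).subset
    fun a ⟨ha, hca⟩ => mem_closedBall_zero_iff.2 ?_
  by_contra! hlt
  have hdecay := hR a ha ((le_max_left _ _).trans hlt.le)
  have hfar := (div_lt_iff₀ hr).1 ((le_max_right _ _).trans_lt hlt)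
  linarith [neg_abs_le c]

theorem exists_isMaxOn [ProperSpace E] (h : DecaysLinearlyOn φ S) (hφ : Continuous φ)
    (hS : IsClosed S) (hne : S.Nonempty) : ∃ m ∈ S, IsMaxOn φ S m := by
  obtain ⟨a₀, ha₀⟩ := hne
  have hK : IsCompact {a ∈ S | φ a₀ ≤ φ a} := Metric.isCompact_of_isClosed_isBounded
    (hS.inter (isClosed_le continuous_const hφ)) (h.isBounded_superlevel _)
  obtain ⟨m, ⟨hmS, -⟩, hm⟩ := hK.exists_isMaxOn ⟨a₀, ha₀, le_rfl⟩ hφ.continuousOn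
  refine ⟨m, hmS, fun a ha => ?_⟩
  rcases le_or_gt (φ a₀) (φ a) with h₀ | h₀
  · exact hm ⟨ha, h₀⟩
  · exact h₀.le.trans (hm ⟨ha₀, le_rfl⟩)

theorem exists_le_sub_mul_norm_add_one [ProperSpace E] (h : DecaysLinearlyOn φ S)
    (hφ : Continuous φ) (hS : IsClosed S) {σ : ℝ} (hlt : ∀ a ∈ S, φ a < σ) :
    ∃ δ > 0, ∀ a ∈ S, φ a ≤ σ - δ * (‖a‖ + 1) := by
  rcases S.eq_empty_or_nonempty with rfl | ⟨a₀, ha₀⟩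
  · exact ⟨1, one_pos, by simp⟩
  obtain ⟨r, hr, R, hR⟩ := h
  -- Truncated at `-r/2`, the slope is constant far out along `S`, so it attains its maximum.
  set ψ : E → ℝ := fun a => max ((φ a - σ) / (‖a‖ + 1)) (-(r / 2))
  have hψ : Continuous ψ :=
    ((hφ.sub continuous_const).div (continuous_norm.add continuous_const)
      fun a => (by positivity : (0 : ℝ) < ‖a‖ + 1).ne').max continuous_const
  have hfar : ∀ᶠ a in cocompact E ⊓ 𝓟 S, ψ a ≤ ψ a₀ := by
    rw [eventually_inf_principal]
    filter_upwards [tendsto_norm_cocompact_atTop.eventually_ge_atTop (max R ((r - 2 * σ) / r))]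
      with a ha haS
    have hdecay := hR a haS ((le_max_left _ _).trans ha)
    have hlarge := (div_le_iff₀ hr).1 ((le_max_right _ _).trans ha)
    refine (max_le ?_ le_rfl).trans (le_max_right _ _)
    rw [div_le_iff₀ (by positivity)]
    linarith
  obtain ⟨m, hmS, hm⟩ := hψ.continuousOn.exists_isMaxOn' hS ha₀ hfar
  have hψm : ψ m < 0 :=
    max_lt (div_neg_of_neg_of_pos (sub_neg.2 (hlt m hmS)) (by positivity)) (by linarith)
  refine ⟨-ψ m, neg_pos.2 hψm, fun a ha => ?_⟩
  have hslope : (φ a - σ) / (‖a‖ + 1) ≤ ψ m := (le_max_left _ _).trans (hm ha)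
  rw [div_le_iff₀ (by positivity)] at hslope
  linarith

end DecaysLinearlyOn

theorem lt_zero_of_mem_interior_negDual {P : Set X} {f : X →L[ℝ] ℝ}
    (hf : f ∈ interior (negDual P)) {u : X} (huP : u ∈ P) (hu : u ≠ 0) : f u < 0 := by
  obtain ⟨ε, hε, hball⟩ := Metric.isOpen_iff.1 isOpen_interior f hf
  obtain ⟨g, hg, hgu⟩ := exists_dual_vector ℝ u (norm_ne_zero_iff.2 hu)
  have hmem : f + (ε / 2) • g ∈ negDual P := interior_subset <| hball <| by
    simpa [norm_smul, hg, abs_of_pos hε] using half_lt_self hε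
  have hfu : f u + ε / 2 * ‖u‖ ≤ 0 := by simpa [hgu] using hmem u huP
  nlinarith [norm_pos_iff.2 hu]

theorem decaysLinearlyOn_of_mem_interior_negDual [ProperSpace X] {A S : Set X} (hAS : A ⊆ S)
    {f : X →L[ℝ] ℝ} (hf : f ∈ interior (negDual (recessionCone S))) :
    DecaysLinearlyOn f A := by
  unfold DecaysLinearlyOn
  by_contra! hcon
  choose a haA hR hlt using fun n : ℕ => hcon (1 / (n + 1)) (by positivity) (n + 1)
  have hpos : ∀ n, 0 < ‖a n‖ := fun n => (by positivity : (0 : ℝ) < n + 1).trans_le (hR n)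
  set u := fun n => ‖a n‖⁻¹ • a n
  have hu : ∀ n : ℕ, -(1 / ((n : ℝ) + 1)) < f (u n) := fun n => by
    rw [map_smul, smul_eq_mul, ← div_eq_inv_mul, lt_div_iff₀ (hpos n)]
    linarith [hlt n]
  obtain ⟨z, hz, ψ, hψ, hlim⟩ := (isCompact_sphere (0 : X) 1).tendsto_subseq (x := u)
    fun n => by simp [u, norm_smul, (hpos n).ne']
  have hz0 : z ≠ 0 := by
    rintro rfl
    simp at hz
  have hzP : z ∈ recessionCone S := by
    refine ⟨fun n => ‖a (ψ n)‖⁻¹, fun n => inv_pos.2 (hpos _), ?_, fun n => a (ψ n),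
      fun n => hAS (haA _), hlim⟩
    exact tendsto_inv_atTop_zero.comp <| tendsto_atTop_mono (fun n => hR (ψ n)) <|
      tendsto_atTop_add_const_right _ 1 (tendsto_natCast_atTop_atTop.comp hψ.tendsto_atTop)
  have hfz : 0 ≤ f z := by
    have hlow : Tendsto (fun n => -(1 / ((ψ n : ℝ) + 1))) atTop (𝓝 0) := by
      rw [← neg_zero]
      exact (tendsto_one_div_add_atTop_nhds_zero_nat.comp hψ.tendsto_atTop).neg
    exact le_of_tendsto_of_tendsto' hlow ((f.continuous.tendsto z).comp hlim) fun n => (hu _).le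
  exact (lt_zero_of_mem_interior_negDual hf hzP hz0).not_ge hfz

theorem isCompact_Wset [ProperSpace X] {A : Set X} (hA : IsClosed A) {f : X →L[ℝ] ℝ}
    (hf : DecaysLinearlyOn f A) {m : X} (hm : m ∈ A) (hmax : IsMaxOn f A m) :
    IsCompact (Wset A f) := by
  rw [Wset_eq_of_supportFn_eq (supportFn_eq_of_isMaxOn hm hmax)]
  exact Metric.isCompact_of_isClosed_isBounded (hA.inter (isClosed_eq f.continuous
    continuous_const)) ((hf.isBounded_superlevel (f m)).subset fun a ha => ⟨ha.1, ha.2.ge⟩)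

theorem subdiff_subset_convexHull_Wset [FiniteDimensional ℝ X] {A : Set X} (hA : IsClosed A)
    {f : X →L[ℝ] ℝ} (hf : DecaysLinearlyOn f A) {m : X} (hm : m ∈ A) (hmax : IsMaxOn f A m) :
    subdiff A f ⊆ convexHull ℝ (Wset A f) := by
  have hs := supportFn_eq_of_isMaxOn hm hmax
  intro u hu
  by_contra hu'
  obtain ⟨h, c, hWc, hcu⟩ :=
    geometric_hahn_banach_closed_point (convex_convexHull ℝ _)
      (isCompact_Wset hA hf hm hmax).convexHull.isClosed hu'
  have hbelow : ∀ a ∈ A ∩ {b | c ≤ h b}, f a < f m := by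
    rintro a ⟨haA, hca⟩
    refine lt_of_le_of_ne (hmax haA) fun hfa => (hWc a (subset_convexHull ℝ _ ?_)).not_ge hca
    rw [Wset_eq_of_supportFn_eq hs]
    exact ⟨haA, hfa⟩
  obtain ⟨δ, hδ, hgap⟩ := (hf.mono inter_subset_left).exists_le_sub_mul_norm_add_one
    f.continuous (hA.inter (isClosed_le continuous_const h.continuous)) hbelow
  set t := δ / (‖h‖ + |c| + 1)
  have ht : 0 < t := by positivity
  have htilt : ∀ a ∈ A, (f + t • h) a ≤ f m + t * c := by
    intro a ha
    simp only [add_apply, smul_apply, smul_eq_mul]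
    rcases le_or_gt c (h a) with hca | hac
    · have hha : h a - c ≤ (‖h‖ + |c| + 1) * (‖a‖ + 1) := by
        nlinarith [(le_abs_self (h a)).trans (h.le_opNorm a), neg_le_abs c, norm_nonneg h,
          norm_nonneg a, abs_nonneg c]
      have htδ : t * (h a - c) ≤ δ * (‖a‖ + 1) := calc
        t * (h a - c) ≤ t * ((‖h‖ + |c| + 1) * (‖a‖ + 1)) := by gcongr
        _ = δ * (‖a‖ + 1) := by rw [← mul_assoc, div_mul_cancel₀ _ (by positivity)]
      linarith [hgap a ⟨ha, hca⟩]
    · have hfa : f a ≤ f m := hmax ha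
      linarith [mul_lt_mul_of_pos_left hac ht]
  have hsub := (mem_subdiff_iff hs).1 hu (f + t • h) (f m + t * c) htilt
  simp only [add_apply, smul_apply, smul_eq_mul] at hsub
  linarith [mul_lt_mul_of_pos_left hcu ht]

theorem stmt3_general [FiniteDimensional ℝ X]
    (A : Set X) (hA : A.Nonempty) (hAclosed : IsClosed A)
    (P : Set X) (hP : P = recessionCone (closure (convexHull ℝ A))) :
    ∀ f ∈ interior (negDual P),
      subdiff A f = convexHull ℝ (Wset A f) ∧
      convexHull ℝ (Wset A f) ⊆ convexHull ℝ A := by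
  intro f hf
  subst hP
  have hdecay : DecaysLinearlyOn f A :=
    decaysLinearlyOn_of_mem_interior_negDual ((subset_convexHull ℝ A).trans subset_closure) hf
  obtain ⟨m, hm, hmax⟩ := hdecay.exists_isMaxOn f.continuous hAclosed hA
  exact ⟨(subdiff_subset_convexHull_Wset hAclosed hdecay hm hmax).antisymm
    (convexHull_Wset_subset_subdiff (supportFn_eq_of_isMaxOn hm hmax)),
    convexHull_mono fun a ha => ha.1⟩

/-- For a nonempty closed set `A` in a nontrivial finite-dimensional real
normed space whose closed convex hull has a pointed recession cone `P`, for every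
`x* ∈ int P⁻` one has `∂σ_A(x*) = conv W_A(x*) ⊆ conv A`. -/
theorem stmt3 [FiniteDimensional ℝ X] [Nontrivial X]
    (A : Set X) (hA : A.Nonempty) (hAclosed : IsClosed A)
    (P : Set X) (hP : P = recessionCone (closure (convexHull ℝ A)))
    (hpointed : P ∩ (-P) = {0}) :
    ∀ f ∈ interior (negDual P),
      subdiff A f = convexHull ℝ (Wset A f) ∧
      convexHull ℝ (Wset A f) ⊆ convexHull ℝ A :=
  stmt3_general A hA hAclosed P hP
end

section
/- Let X be a finite-dimensional real normed space with dual X*, and let A ⊂ X be a nonempty closed set such that the recession cone P := (cl conv A)_∞ of the closed convex hull of A is pointed. Let x* ∈ int P⁻. Then σ_A is (Fréchet) differentiable at x* if and only if W_A(x*) := {a ∈ A : ⟨a, x*⟩ = σ_A(x*)} is a singleton; in that case the gradient ∇σ_A(x*) belongs to A and W_A(x*) = {∇σ_A(x*)}. -/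
open Set Filter Topology Pointwise

variable {X : Type*} [NormedAddCommGroup X] [NormedSpace ℝ X]

/-- `σ_A` is (Fréchet) differentiable at `f`: there is a real-valued function agreeing
with `σ_A` on a neighbourhood of `f` which is differentiable at `f`. -/
def SigmaDiffAt (A : Set X) (f : X →L[ℝ] ℝ) : Prop :=
  ∃ g : (X →L[ℝ] ℝ) → ℝ, (∀ᶠ y in 𝓝 f, ((g y : ℝ) : EReal) = supportFn A y) ∧
    DifferentiableAt ℝ g f

/-!
Writing `P` for the recession cone, an `x* ∈ int P⁻` satisfies `x* ≤ -c‖·‖` on `P` for some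
`c > 0`; by compactness of the unit sphere, every `y` near `x*` is then `≤ -(c/4)‖·‖` on the far
part of `A`, so near `x*` only a compact piece `K = A ∩ B(0, R)` matters: `σ_A = σ_K` and
`W_A = W_K`. For compact `K` this is Danskin's theorem: if `g` agrees with `σ_K` near `x*` and
`u ∈ W_K(x*)`, then `g - ⟨u, ·⟩` has a local minimum at `x*`, so `∇g(x*) = u`, which forces
`W_K(x*)` to be a singleton; conversely, the maximizers depend upper semicontinuously on `y`,
which makes `σ_K` differentiable with gradient `u` when `W_K(x*) = {u}`.
-/

section SupportFunction

variable {A K : Set X} {f y : X →L[ℝ] ℝ} {a : X}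

lemma le_supportFn (ha : a ∈ A) : (f a : EReal) ≤ supportFn A f :=
  le_iSup₂ (f := fun a (_ : a ∈ A) => (f a : EReal)) a ha

lemma supportFn_eq_of_isMaxOn_s4 (ha : a ∈ A) (hmax : IsMaxOn f A a) :
    supportFn A f = f a :=
  le_antisymm (iSup₂_le fun _ hb => EReal.coe_le_coe_iff.2 (hmax hb)) (le_supportFn ha)

lemma mem_Wset_iff : a ∈ Wset A f ↔ a ∈ A ∧ IsMaxOn f A a := by
  refine ⟨fun ⟨ha, hσ⟩ => ⟨ha, fun b hb => ?_⟩, fun ⟨ha, hmax⟩ =>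
    ⟨ha, (supportFn_eq_of_isMaxOn_s4 ha hmax).symm⟩⟩
  exact EReal.coe_le_coe_iff.1 (hσ ▸ le_supportFn hb)

lemma supportFn_eq_of_mem_Wset (ha : a ∈ Wset A f) : supportFn A f = f a :=
  ha.2.symm

lemma Wset_nonempty_of_isCompact (hK : IsCompact K) (hne : K.Nonempty) (f : X →L[ℝ] ℝ) :
    (Wset K f).Nonempty := by
  obtain ⟨a, ha, hmax⟩ := hK.exists_isMaxOn hne f.continuous.continuousOn
  exact ⟨a, mem_Wset_iff.2 ⟨ha, hmax⟩⟩

lemma apply_sub_apply_le (y f : X →L[ℝ] ℝ) (a : X) : y a - f a ≤ ‖y - f‖ * ‖a‖ :=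
  (le_abs_self _).trans ((y - f).le_opNorm a)

lemma sigmaDiffAt_congr {B : Set X} (h : ∀ᶠ y in 𝓝 f, supportFn A y = supportFn B y) :
    SigmaDiffAt A f ↔ SigmaDiffAt B f := by
  constructor <;> rintro ⟨g, hg, hgd⟩ <;> refine ⟨g, ?_, hgd⟩ <;>
    filter_upwards [hg, h] with y hgy hy <;> simp [hgy, hy]

lemma supportFn_eq_of_dominates (hKA : K ⊆ A) (hdom : ∀ a ∈ A \ K, ∃ b ∈ K, y a < y b) :
    supportFn A y = supportFn K y := by
  refine le_antisymm (iSup₂_le fun a ha => ?_) (biSup_mono fun a ha => hKA ha)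
  by_cases haK : a ∈ K
  · exact le_supportFn haK
  · obtain ⟨b, hb, hlt⟩ := hdom a ⟨ha, haK⟩
    exact (EReal.coe_le_coe_iff.2 hlt.le).trans (le_supportFn hb)

lemma Wset_eq_of_dominates (hKA : K ⊆ A) (hdom : ∀ a ∈ A \ K, ∃ b ∈ K, y a < y b) :
    Wset A y = Wset K y := by
  ext a
  simp only [mem_Wset_iff]
  constructor
  · rintro ⟨ha, hmax⟩
    have haK : a ∈ K := by
      by_contra haK
      obtain ⟨b, hb, hlt⟩ := hdom a ⟨ha, haK⟩
      exact (hmax (hKA hb)).not_gt hlt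
    exact ⟨haK, hmax.on_subset hKA⟩
  · rintro ⟨haK, hmax⟩
    refine ⟨hKA haK, fun b hb => ?_⟩
    by_cases hbK : b ∈ K
    · exact hmax hbK
    · obtain ⟨c, hc, hlt⟩ := hdom b ⟨hb, hbK⟩
      exact hlt.le.trans (hmax hc)

end SupportFunction

section Danskin

variable {A K : Set X} {f : X →L[ℝ] ℝ} {g : (X →L[ℝ] ℝ) → ℝ} {u : X}

lemma fderiv_eq_apply_of_mem_Wset (hg : ∀ᶠ y in 𝓝 f, (g y : EReal) = supportFn A y)
    (hgd : DifferentiableAt ℝ g f) (hu : u ∈ Wset A f) :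
    fderiv ℝ g f = ContinuousLinearMap.apply ℝ ℝ u := by
  have hmin : IsLocalMin (fun y => g y - y u) f := by
    filter_upwards [hg] with y hy
    have hf : g f = f u := by
      exact_mod_cast hg.self_of_nhds.trans (supportFn_eq_of_mem_Wset hu)
    have hyu : y u ≤ g y := by exact_mod_cast hy ▸ le_supportFn hu.1
    simp only [hf, sub_self, sub_nonneg, hyu]
  have hd : HasFDerivAt (fun y => g y - y u)
      (fderiv ℝ g f - ContinuousLinearMap.apply ℝ ℝ u) f :=
    hgd.hasFDerivAt.sub (ContinuousLinearMap.apply ℝ ℝ u).hasFDerivAt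
  exact sub_eq_zero.1 (hd.fderiv ▸ hmin.fderiv_eq_zero)

lemma Wset_subsingleton (hg : ∀ᶠ y in 𝓝 f, (g y : EReal) = supportFn A y)
    (hgd : DifferentiableAt ℝ g f) : (Wset A f).Subsingleton := fun u hu v hv =>
  SeparatingDual.eq_iff_forall_dual_eq.2 fun h => by
    simpa using congrArg (· h) ((fderiv_eq_apply_of_mem_Wset hg hgd hu).symm.trans
      (fderiv_eq_apply_of_mem_Wset hg hgd hv))

lemma eventually_Wset_subset (hK : IsCompact K) {U : Set X} (hU : IsOpen U)
    (hKU : Wset K f ⊆ U) : ∀ᶠ y in 𝓝 f, Wset K y ⊆ U := by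
  have hcont : Continuous fun p : (X →L[ℝ] ℝ) × X => p.1 p.2 :=
    isBoundedBilinearMap_apply.continuous
  have key : ∀ᶠ y in 𝓝 f, ∀ b ∈ K \ U, ∃ a ∈ K, y b < y a := by
    refine (hK.diff hU).eventually_forall_of_forall_eventually fun b hb => ?_
    obtain ⟨a, ha, hlt⟩ : ∃ a ∈ K, f b < f a := by
      by_contra! h
      exact hb.2 (hKU (mem_Wset_iff.2 ⟨hb.1, h⟩))
    have hopen : IsOpen {p : (X →L[ℝ] ℝ) × X | p.1 p.2 < p.1 a} :=
      isOpen_lt hcont (hcont.comp (continuous_fst.prodMk continuous_const))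
    filter_upwards [hopen.mem_nhds hlt] with p hp using ⟨a, ha, hp⟩
  filter_upwards [key] with y hy b hb
  by_contra hbU
  obtain ⟨a, ha, hlt⟩ := hy b ⟨hb.1, hbU⟩
  exact (mem_Wset_iff.1 hb).2 ha |>.not_gt hlt

lemma hasFDerivAt_supportFn_toReal (hK : IsCompact K) (hu : Wset K f = {u}) :
    HasFDerivAt (fun y => (supportFn K y).toReal) (ContinuousLinearMap.apply ℝ ℝ u) f := by
  have huW : u ∈ Wset K f := hu ▸ rfl
  have hσf : (supportFn K f).toReal = f u := by rw [supportFn_eq_of_mem_Wset huW]; rfl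
  rw [hasFDerivAt_iff_isLittleO, Asymptotics.isLittleO_iff]
  intro ε hε
  filter_upwards [eventually_Wset_subset hK Metric.isOpen_ball
    (hu.trans_subset (singleton_subset_iff.2 (Metric.mem_ball_self hε)))] with y hy
  obtain ⟨b, hb⟩ := Wset_nonempty_of_isCompact hK ⟨u, huW.1⟩ y
  have hσy : (supportFn K y).toReal = y b := by rw [supportFn_eq_of_mem_Wset hb]; rfl
  have hub : y u ≤ y b := (mem_Wset_iff.1 hb).2 huW.1
  have hfb : f b ≤ f u := (mem_Wset_iff.1 huW).2 hb.1
  have hbu : ‖b - u‖ < ε := by simpa [dist_eq_norm] using hy hb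
  have hyf := apply_sub_apply_le y f (b - u)
  simp only [map_sub] at hyf
  simp only [hσy, hσf, ContinuousLinearMap.apply_apply, FunLike.coe_sub,
    Pi.sub_apply, sub_sub_sub_cancel_right, Real.norm_eq_abs, abs_of_nonneg (sub_nonneg.2 hub)]
  nlinarith [norm_nonneg (y - f)]

lemma sigmaDiffAt_of_isCompact (hK : IsCompact K) (hu : Wset K f = {u}) : SigmaDiffAt K f := by
  refine ⟨_, Eventually.of_forall fun y => ?_,
    (hasFDerivAt_supportFn_toReal hK hu).differentiableAt⟩
  obtain ⟨b, hb⟩ := Wset_nonempty_of_isCompact hK ⟨u, (hu ▸ rfl : u ∈ Wset K f).1⟩ y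
  rw [supportFn_eq_of_mem_Wset hb]; rfl

end Danskin

section RecessionCone

lemma negDual_anti {P Q : Set X} (h : P ⊆ Q) : negDual Q ⊆ negDual P :=
  fun _ hf x hx => hf x (h hx)

lemma mem_recessionCone_of_tendsto {C : Set X} {a : ℕ → X} {v : X} (ha : ∀ n, a n ∈ C)
    (hpos : ∀ n, 0 < ‖a n‖) (hnorm : Tendsto (fun n => ‖a n‖) atTop atTop)
    (hv : Tendsto (fun n => ‖a n‖⁻¹ • a n) atTop (𝓝 v)) : v ∈ recessionCone C :=
  ⟨fun n => ‖a n‖⁻¹, fun n => inv_pos.2 (hpos n), tendsto_inv_atTop_zero.comp hnorm, a, ha, hv⟩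

lemma exists_pos_forall_le_neg_mul_norm {P : Set X} {f : X →L[ℝ] ℝ}
    (hf : f ∈ interior (negDual P)) : ∃ c > 0, ∀ x ∈ P, f x ≤ -c * ‖x‖ := by
  obtain ⟨ε, hε, hball⟩ := Metric.mem_nhds_iff.1 (mem_interior_iff_mem_nhds.1 hf)
  refine ⟨ε / 2, half_pos hε, fun x hx => ?_⟩
  rcases eq_or_ne x 0 with rfl | hx0
  · simp
  obtain ⟨g, hg1, hgx⟩ := exists_dual_vector ℝ x (norm_ne_zero_iff.2 hx0)
  have hmem : f + (ε / 2) • g ∈ Metric.ball f ε := by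
    rw [Metric.mem_ball, dist_eq_norm, add_sub_cancel_left, norm_smul, hg1, Real.norm_eq_abs,
      abs_of_pos (half_pos hε)]
    linarith
  have h := hball hmem x hx
  simp only [add_apply, smul_apply, smul_eq_mul, hgx, RCLike.ofReal_real_eq_id, id] at h
  linarith

/-- Otherwise, normalizing far points of `C` violating the bound produces, by compactness of the
unit sphere, a unit vector of the recession cone violating it. -/
lemma exists_forall_le_neg_mul_norm [FiniteDimensional ℝ X] {C : Set X} {f : X →L[ℝ] ℝ}
    {c c' : ℝ} (hc : ∀ x ∈ recessionCone C, f x ≤ -c * ‖x‖) (hc' : c' < c) :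
    ∃ R, ∀ a ∈ C, R ≤ ‖a‖ → f a ≤ -c' * ‖a‖ := by
  by_contra! h
  choose a haC haR haf using fun n : ℕ => h ((n : ℝ) + 1)
  have hpos : ∀ n, 0 < ‖a n‖ := fun n => (Nat.cast_add_one_pos n).trans_le (haR n)
  have hsph : ∀ n, ‖a n‖⁻¹ • a n ∈ Metric.sphere (0 : X) 1 := fun n => by
    rw [mem_sphere_zero_iff_norm, norm_smul, norm_inv, norm_norm, inv_mul_cancel₀ (hpos n).ne']
  obtain ⟨v, hv, φ, hφ, hvlim⟩ := (isCompact_sphere (0 : X) 1).tendsto_subseq hsph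
  have hnorm : Tendsto (fun n => ‖a n‖) atTop atTop :=
    tendsto_atTop_mono haR (tendsto_atTop_add_const_right _ 1 tendsto_natCast_atTop_atTop)
  have hvC := mem_recessionCone_of_tendsto (fun n => haC (φ n)) (fun n => hpos (φ n))
    (hnorm.comp hφ.tendsto_atTop) hvlim
  have hfv : -c' ≤ f v := by
    refine ge_of_tendsto ((f.continuous.tendsto v).comp hvlim) (Eventually.of_forall fun n => ?_)
    have h := haf (φ n)
    simp only [Function.comp_apply, map_smul, smul_eq_mul]
    rw [← div_eq_inv_mul, le_div_iff₀ (hpos _)]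
    exact h.le
  have := hc v hvC
  rw [mem_sphere_zero_iff_norm.1 hv, mul_one] at this
  linarith

end RecessionCone

section Localization

variable [FiniteDimensional ℝ X] {A : Set X} {f : X →L[ℝ] ℝ}

lemma exists_eventually_forall_lt (hf : f ∈ interior (negDual (recessionCone A))) (a₀ : X) :
    ∃ R, ∀ᶠ y in 𝓝 f, ∀ a ∈ A, R < ‖a‖ → y a < y a₀ := by
  obtain ⟨c, hc, hcP⟩ := exists_pos_forall_le_neg_mul_norm hf
  obtain ⟨R, hR⟩ := exists_forall_le_neg_mul_norm hcP (half_lt_self hc)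
  refine ⟨max R (4 * (1 - f a₀) / c), ?_⟩
  have hya₀ : ∀ᶠ y in 𝓝 f, f a₀ - 1 < y a₀ :=
    (continuous_id.clm_apply continuous_const).continuousAt.eventually
      (lt_mem_nhds (sub_one_lt (f a₀)))
  filter_upwards [Metric.ball_mem_nhds f (by positivity : 0 < c / 4), hya₀]
    with y hy hya₀ a ha haR
  rw [Metric.mem_ball, dist_eq_norm] at hy
  have hfa := hR a ha ((le_max_left _ _).trans haR.le)
  have hya := apply_sub_apply_le y f a
  have hfar : 4 * (1 - f a₀) < c * ‖a‖ := by
    rw [← div_lt_iff₀' hc]; exact (le_max_right _ _).trans_lt haR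
  nlinarith [norm_nonneg a]

lemma exists_isCompact_dominating (hA : A.Nonempty) (hAc : IsClosed A)
    (hf : f ∈ interior (negDual (recessionCone A))) :
    ∃ K ⊆ A, IsCompact K ∧ K.Nonempty ∧ ∀ᶠ y in 𝓝 f, ∀ a ∈ A \ K, ∃ b ∈ K, y a < y b := by
  obtain ⟨a₀, ha₀⟩ := hA
  obtain ⟨R, hR⟩ := exists_eventually_forall_lt hf a₀
  have ha₀K : a₀ ∈ A ∩ Metric.closedBall 0 (max R ‖a₀‖) := ⟨ha₀, by simp⟩
  refine ⟨_, inter_subset_left, (isCompact_closedBall _ _).inter_left hAc, ⟨a₀, ha₀K⟩, ?_⟩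
  filter_upwards [hR] with y hy a ha
  have haR : max R ‖a₀‖ < ‖a‖ := by simpa using fun h => ha.2 ⟨ha.1, h⟩
  exact ⟨a₀, ha₀K, hy a ha.1 ((le_max_left _ _).trans_lt haR)⟩

end Localization

theorem stmt4_general [FiniteDimensional ℝ X]
    (A : Set X) (hA : A.Nonempty) (hAclosed : IsClosed A)
    (P : Set X) (hP : P = recessionCone (closure (convexHull ℝ A)))
    (f : X →L[ℝ] ℝ) (hf : f ∈ interior (negDual P)) :
    (SigmaDiffAt A f ↔ ∃ a : X, Wset A f = {a}) ∧
    ∀ g : (X →L[ℝ] ℝ) → ℝ, (∀ᶠ y in 𝓝 f, ((g y : ℝ) : EReal) = supportFn A y) →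
      DifferentiableAt ℝ g f →
      ∃ u ∈ A, Wset A f = {u} ∧ ∀ h : X →L[ℝ] ℝ, fderiv ℝ g f h = h u := by
  subst hP
  have hfA : f ∈ interior (negDual (recessionCone A)) := interior_mono
    (negDual_anti (recessionCone_mono (subset_closure.trans' (subset_convexHull ℝ A)))) hf
  obtain ⟨K, hKA, hK, hKne, hdom⟩ := exists_isCompact_dominating hA hAclosed hfA
  have hσ : ∀ᶠ y in 𝓝 f, supportFn A y = supportFn K y :=
    hdom.mono fun _ => supportFn_eq_of_dominates hKA
  have hW : Wset A f = Wset K f := Wset_eq_of_dominates hKA hdom.self_of_nhds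
  have gradient : ∀ g : (X →L[ℝ] ℝ) → ℝ, (∀ᶠ y in 𝓝 f, (g y : EReal) = supportFn A y) →
      DifferentiableAt ℝ g f →
      ∃ u ∈ A, Wset A f = {u} ∧ ∀ h : X →L[ℝ] ℝ, fderiv ℝ g f h = h u := by
    intro g hg hgd
    obtain ⟨u, hu⟩ := hW ▸ Wset_nonempty_of_isCompact hK hKne f
    refine ⟨u, hu.1, (Wset_subsingleton hg hgd).eq_singleton_of_mem hu, fun h => ?_⟩
    rw [fderiv_eq_apply_of_mem_Wset hg hgd hu, ContinuousLinearMap.apply_apply]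
  refine ⟨⟨fun ⟨g, hg, hgd⟩ => ?_, fun ⟨u, hu⟩ => ?_⟩, gradient⟩
  · obtain ⟨u, -, hu, -⟩ := gradient g hg hgd
    exact ⟨u, hu⟩
  · exact (sigmaDiffAt_congr hσ).2 (sigmaDiffAt_of_isCompact hK (hW ▸ hu))

/-- For a nonempty closed set `A` in a nontrivial finite-dimensional real
normed space whose closed convex hull has a pointed recession cone `P`, and `x* ∈ int P⁻`:
`σ_A` is differentiable at `x*` iff `W_A(x*)` is a singleton; in that case the gradient
`∇σ_A(x*)` belongs to `A` and `W_A(x*) = {∇σ_A(x*)}` (the gradient being identified with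
the point `u ∈ X` via evaluation). -/
theorem stmt4 [FiniteDimensional ℝ X] [Nontrivial X]
    (A : Set X) (hA : A.Nonempty) (hAclosed : IsClosed A)
    (P : Set X) (hP : P = recessionCone (closure (convexHull ℝ A)))
    (hpointed : P ∩ (-P) = {0})
    (f : X →L[ℝ] ℝ) (hf : f ∈ interior (negDual P)) :
    (SigmaDiffAt A f ↔ ∃ a : X, Wset A f = {a}) ∧
    ∀ g : (X →L[ℝ] ℝ) → ℝ, (∀ᶠ y in 𝓝 f, ((g y : ℝ) : EReal) = supportFn A y) →
      DifferentiableAt ℝ g f →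
      ∃ u ∈ A, Wset A f = {u} ∧ ∀ h : X →L[ℝ] ℝ, fderiv ℝ g f h = h u :=
  stmt4_general A hA hAclosed P hP f hf
end

section
/- Let X be a finite-dimensional real normed space with dual X*, and let A ⊂ X be a nonempty closed set such that the recession cone of cl conv A is pointed. If σ_A is (Fréchet) differentiable at every point of dom ∂σ_A \ (lin₀A)^⊥, then the relative boundary of cl conv A is contained in A, i.e. rbd(cl conv A) ⊂ A. -/
open Set Filter Topology Pointwise

variable {X : Type*} [NormedAddCommGroup X] [NormedSpace ℝ X]

/-!
A relative boundary point `x` of `C = cl conv A` is supported by a functional `f` that does not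
vanish on `lin₀ A`. Then `x ∈ ∂σ_A(f)`, so `σ_A` is differentiable at `f`, and since evaluation at
any maximiser of `f` on `C` is a gradient of `σ_A` at `f`, `x` is the only maximiser: it is an
exposed point of `C`. Exposed points of the closed convex hull of a closed set `A` lie in `A`: a
sequence in `A` along which `f` tends to `f x` either has a convergent subsequence, whose limit is
a maximiser lying in `A`, or escapes to infinity and yields a unit recession direction `w` of `C`
with `f w = 0`, which makes `x + w` a second maximiser.
-/

theorem apply_le_of_mem_closure_convexHull_s5 {A : Set X} (g : X →L[ℝ] ℝ) {r : ℝ}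
    (h : ∀ a ∈ A, g a ≤ r) {u : X} (hu : u ∈ closure (convexHull ℝ A)) : g u ≤ r :=
  closure_minimal (convexHull_min h (convex_halfSpace_le g.toLinearMap.isLinear r))
    (isClosed_le g.continuous continuous_const) hu

theorem affineSpan_closure_convexHull [FiniteDimensional ℝ X] (A : Set X) :
    affineSpan ℝ (closure (convexHull ℝ A)) = affineSpan ℝ A := by
  refine le_antisymm (affineSpan_le.2 ?_)
    (affineSpan_mono ℝ ((subset_convexHull ℝ A).trans subset_closure))
  refine closure_minimal ?_ (affineSpan ℝ A).closed_of_finiteDimensional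
  rw [← affineSpan_convexHull]
  exact subset_affineSpan ℝ _

-- Translate `C` by `-x` into the direction `V` of its affine span, where it has nonempty interior
-- avoiding `0`; separate there and extend the functional to `X` by Hahn–Banach.
theorem Convex.exists_isMaxOn_of_notMem_intrinsicInterior [FiniteDimensional ℝ X] {C : Set X}
    (hC : Convex ℝ C) {x : X} (hx : x ∈ C) (hx' : x ∉ intrinsicInterior ℝ C) :
    ∃ f : X →L[ℝ] ℝ, IsMaxOn f C x ∧ ∃ v ∈ (affineSpan ℝ C).direction, f v ≠ 0 := by
  set V := (affineSpan ℝ C).direction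
  let e : V →ᵃⁱ[ℝ] X :=
    (AffineIsometryEquiv.vaddConst ℝ x).toAffineIsometry.comp V.subtypeₗᵢ.toAffineIsometry
  have he : ∀ v, e v = v + x := fun v => rfl
  set E := e ⁻¹' C
  have hCE : e '' E = C := by
    refine image_preimage_eq_of_subset fun c hc => ⟨⟨c - x, ?_⟩, by simp [he]⟩
    exact AffineSubspace.vsub_mem_direction (subset_affineSpan ℝ C hc) (subset_affineSpan ℝ C hx)
  have hE0 : (0 : V) ∈ E := by simpa [E, he] using hx
  have hE : Convex ℝ E := hC.affine_preimage e.toAffineMap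
  have hspan : affineSpan ℝ E = ⊤ := by
    have hdir := congrArg AffineSubspace.direction (AffineSubspace.map_span e.toAffineMap E)
    rw [AffineSubspace.map_direction, AffineIsometry.coe_toAffineMap, hCE] at hdir
    rw [← AffineSubspace.direction_eq_top_iff_of_nonempty ⟨0, subset_affineSpan ℝ E hE0⟩,
      eq_top_iff]
    intro v _
    obtain ⟨w, hw, hwv⟩ : (v : X) ∈ (affineSpan ℝ E).direction.map e.linear := by
      rw [hdir]
      exact v.2
    exact Subtype.ext hwv ▸ hw
  have hint : (0 : V) ∉ interior E := fun h => hx' <| by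
    rw [← hCE, e.intrinsicInterior_image]
    exact ⟨0, interior_subset_intrinsicInterior h, by simp [he]⟩
  obtain ⟨φ, r, hφ, hφE, hφ0⟩ := geometric_hahn_banach_of_nonempty_interior hE
    (convex_singleton 0) (disjoint_singleton_right.2 hint)
    (hE.interior_nonempty_iff_affineSpan_eq_top.2 hspan) (singleton_nonempty 0)
  obtain ⟨f, hf, -⟩ := exists_extension_norm_eq V φ
  refine ⟨f, isMaxOn_iff.2 fun c hc => ?_, ?_⟩
  · obtain ⟨v, hv, rfl⟩ := hCE.symm ▸ hc
    have : φ v ≤ 0 := map_zero φ ▸ (hφE v hv).trans (hφ0 0 rfl)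
    rw [he, map_add, hf]
    linarith
  · obtain ⟨v, hv⟩ : ∃ v, φ v ≠ 0 := by
      by_contra! h
      exact hφ (ContinuousLinearMap.ext h)
    exact ⟨v, v.2, by rwa [hf]⟩

theorem Convex.add_mem_of_mem_recessionCone {C : Set X} (hC : Convex ℝ C) (hCc : IsClosed C)
    {x w : X} (hx : x ∈ C) (hw : w ∈ recessionCone C) : x + w ∈ C := by
  obtain ⟨t, ht0, ht, a, haC, hta⟩ := hw
  have hlim : Tendsto (fun n => (1 - t n) • x + t n • a n) atTop (𝓝 (x + w)) := by
    simpa using (((tendsto_const_nhds (x := (1 : ℝ))).sub ht).smul_const x).add hta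
  refine hCc.mem_of_tendsto hlim ?_
  filter_upwards [ht.eventually (ge_mem_nhds one_pos)] with n htn
  exact hC hx (haC n) (sub_nonneg.2 htn) (ht0 n).le (sub_add_cancel 1 (t n))

theorem exists_mem_recessionCone_of_tendsto_norm_atTop [FiniteDimensional ℝ X] {S : Set X}
    {a : ℕ → X} (haS : ∀ n, a n ∈ S) (ha : Tendsto (fun n => ‖a n‖) atTop atTop)
    (l : X →L[ℝ] ℝ) {c : ℝ} (hl : Tendsto (fun n => l (a n)) atTop (𝓝 c)) :
    ∃ w ∈ recessionCone S, ‖w‖ = 1 ∧ l w = 0 := by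
  -- `(1 + ‖a n‖)⁻¹` rather than `‖a n‖⁻¹`, which would vanish wherever `a n = 0`.
  set t : ℕ → ℝ := fun n => (1 + ‖a n‖)⁻¹
  have ht0 : ∀ n, 0 < t n := fun n => by positivity
  have ht : Tendsto t atTop (𝓝 0) :=
    tendsto_inv_atTop_zero.comp (tendsto_atTop_add_const_left _ 1 ha)
  have hnorm : ∀ n, ‖t n • a n‖ = 1 - t n := fun n => by
    rw [norm_smul, Real.norm_of_nonneg (ht0 n).le]
    simp only [t]
    field_simp
    ring
  obtain ⟨w, -, φ, hφ, hw⟩ :=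
    tendsto_subseq_of_bounded (Metric.isBounded_closedBall (x := 0) (r := 1)) fun n =>
      mem_closedBall_zero_iff.2 ((hnorm n).trans_le (by linarith [ht0 n]))
  refine ⟨w, ⟨t ∘ φ, fun n => ht0 _, ht.comp hφ.tendsto_atTop, a ∘ φ, fun n => haS _, hw⟩,
    tendsto_nhds_unique hw.norm ?_, tendsto_nhds_unique ((l.continuous.tendsto w).comp hw) ?_⟩
  · simpa [Function.comp_def, hnorm] using (tendsto_const_nhds.sub ht).comp hφ.tendsto_atTop
  · simpa [Function.comp_def] using ((ht.mul hl).comp hφ.tendsto_atTop)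

theorem exposedPoints_closure_convexHull_subset [FiniteDimensional ℝ X] {A : Set X}
    (hA : IsClosed A) : (closure (convexHull ℝ A)).exposedPoints ℝ ⊆ A := by
  rintro x ⟨hx, l, hl⟩
  have hAC : A ⊆ closure (convexHull ℝ A) := (subset_convexHull ℝ A).trans subset_closure
  have hlub : IsLUB (l '' A) (l x) := by
    refine ⟨?_, fun r hr => apply_le_of_mem_closure_convexHull_s5 l (fun a ha => hr ⟨a, ha, rfl⟩) hx⟩
    rintro _ ⟨a, ha, rfl⟩
    exact (hl a (hAC ha)).1
  have hAne : A.Nonempty := nonempty_iff_ne_empty.2 <| by rintro rfl; simp at hx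
  obtain ⟨u, -, -, hu, hmem⟩ := hlub.exists_seq_monotone_tendsto (hAne.image l)
  choose a haA hla using hmem
  have hlim : Tendsto (fun n => l (a n)) atTop (𝓝 (l x)) := by simpa only [hla] using hu
  by_cases hbdd : ∃ M : ℝ, ∃ᶠ n in atTop, a n ∈ Metric.closedBall 0 M
  · obtain ⟨M, hM⟩ := hbdd
    obtain ⟨y, -, φ, hφ, hy⟩ :=
      tendsto_subseq_of_frequently_bounded Metric.isBounded_closedBall hM
    have hyA : y ∈ A := hA.mem_of_tendsto hy (Eventually.of_forall fun n => haA _)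
    have hly : l y = l x :=
      tendsto_nhds_unique ((l.continuous.tendsto y).comp hy) (hlim.comp hφ.tendsto_atTop)
    exact (hl y (hAC hyA)).2 hly.ge ▸ hyA
  · push Not at hbdd
    have hinf : Tendsto (fun n => ‖a n‖) atTop atTop :=
      tendsto_atTop.2 fun M => (hbdd M).mono fun n hn => le_of_lt (by simpa using hn)
    obtain ⟨w, hw, hw1, hlw⟩ :=
      exists_mem_recessionCone_of_tendsto_norm_atTop (fun n => hAC (haA n)) hinf l hlim
    have hxw := (hl (x + w) ((convex_convexHull ℝ A).closure.add_mem_of_mem_recessionCone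
      isClosed_closure hx hw)).2 (by simp [hlw])
    rw [add_eq_left.1 hxw, norm_zero] at hw1
    exact absurd hw1 zero_ne_one

section SupportFunction

variable {A : Set X}

theorem le_supportFn_of_mem_closure_convexHull (g : X →L[ℝ] ℝ) {u : X}
    (hu : u ∈ closure (convexHull ℝ A)) : (g u : EReal) ≤ supportFn A g :=
  EReal.le_of_forall_lt_iff_le.1 fun _ hr => EReal.coe_le_coe_iff.2 <|
    apply_le_of_mem_closure_convexHull_s5 g (fun a ha => EReal.coe_le_coe_iff.1 <|
      (le_iSup₂ (f := fun a (_ : a ∈ A) => (g a : EReal)) a ha).trans hr.le) hu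

theorem supportFn_eq_of_isMaxOn_s5 {f : X →L[ℝ] ℝ} {x : X} (hx : x ∈ closure (convexHull ℝ A))
    (hmax : IsMaxOn f (closure (convexHull ℝ A)) x) : supportFn A f = f x :=
  le_antisymm
    (iSup₂_le fun a ha => EReal.coe_le_coe_iff.2 <|
      isMaxOn_iff.1 hmax a (subset_closure (subset_convexHull ℝ A ha)))
    (le_supportFn_of_mem_closure_convexHull f hx)

theorem mem_subdiff_of_isMaxOn {f : X →L[ℝ] ℝ} {x : X} (hx : x ∈ closure (convexHull ℝ A))
    (hmax : IsMaxOn f (closure (convexHull ℝ A)) x) : x ∈ subdiff A f := by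
  have hfx := supportFn_eq_of_isMaxOn_s5 hx hmax
  refine ⟨hfx ▸ EReal.coe_ne_top _, fun g => ?_⟩
  rw [hfx, ← EReal.coe_add, add_sub_cancel]
  exact le_supportFn_of_mem_closure_convexHull g hx

theorem HasFDerivAt.eq_apply_of_supportFn_eq {f : X →L[ℝ] ℝ} {g : (X →L[ℝ] ℝ) → ℝ}
    {g' : (X →L[ℝ] ℝ) →L[ℝ] ℝ} (hg' : HasFDerivAt g g' f)
    (hg : ∀ᶠ y in 𝓝 f, (g y : EReal) = supportFn A y) {u : X} (hu : u ∈ closure (convexHull ℝ A))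
    (hfu : supportFn A f = f u) : g' = ContinuousLinearMap.apply ℝ ℝ u := by
  have hmin : IsLocalMin (fun y : X →L[ℝ] ℝ => g y - y u) f := by
    have hgf : g f = f u := EReal.coe_injective (hg.self_of_nhds.trans hfu)
    filter_upwards [hg] with y hy
    have : y u ≤ g y := EReal.coe_le_coe_iff.1 (hy ▸ le_supportFn_of_mem_closure_convexHull y hu)
    simp only [hgf, sub_self, sub_nonneg, this]
  exact sub_eq_zero.1 <| hmin.hasFDerivAt_eq_zero <|
    hg'.sub (ContinuousLinearMap.apply ℝ ℝ u).hasFDerivAt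

theorem SigmaDiffAt.mem_exposedPoints {f : X →L[ℝ] ℝ} (hf : SigmaDiffAt A f) {x : X}
    (hx : x ∈ closure (convexHull ℝ A)) (hmax : IsMaxOn f (closure (convexHull ℝ A)) x) :
    x ∈ (closure (convexHull ℝ A)).exposedPoints ℝ := by
  obtain ⟨g, hg, hgd⟩ := hf
  have hfx := supportFn_eq_of_isMaxOn_s5 hx hmax
  refine ⟨hx, f, fun y hy => ⟨isMaxOn_iff.1 hmax y hy, fun hxy => ?_⟩⟩
  have hfy : supportFn A f = f y := by rw [hfx, le_antisymm (isMaxOn_iff.1 hmax y hy) hxy]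
  have := (hgd.hasFDerivAt.eq_apply_of_supportFn_eq hg hy hfy).symm.trans
    (hgd.hasFDerivAt.eq_apply_of_supportFn_eq hg hx hfx)
  exact SeparatingDual.eq_iff_forall_dual_eq.2 fun φ => congr($this φ)

end SupportFunction

theorem stmt5_general [FiniteDimensional ℝ X]
    (A : Set X) (hAclosed : IsClosed A)
    (hdiff : ∀ f : X →L[ℝ] ℝ, (subdiff A f).Nonempty →
      ¬ (∀ x ∈ (affineSpan ℝ A).direction, f x = 0) → SigmaDiffAt A f) :
    intrinsicFrontier ℝ (closure (convexHull ℝ A)) ⊆ A := by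
  intro x hx
  have hxC : x ∈ closure (convexHull ℝ A) := intrinsicFrontier_subset isClosed_closure hx
  rw [← intrinsicClosure_sdiff_intrinsicInterior] at hx
  obtain ⟨f, hmax, v, hv, hfv⟩ :=
    (convex_convexHull ℝ A).closure.exists_isMaxOn_of_notMem_intrinsicInterior hxC hx.2
  rw [affineSpan_closure_convexHull] at hv
  have hf : SigmaDiffAt A f :=
    hdiff f ⟨x, mem_subdiff_of_isMaxOn hxC hmax⟩ fun h => hfv (h v hv)
  exact exposedPoints_closure_convexHull_subset hAclosed (hf.mem_exposedPoints hxC hmax)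

/-- Let `A` be a nonempty closed set in a nontrivial finite-dimensional
real normed space whose closed convex hull has a pointed recession cone. If `σ_A` is
differentiable at every point of `dom ∂σ_A \ (lin₀ A)^⊥` then the relative boundary of
`cl conv A` is contained in `A`. Here `lin₀ A` is the direction of the affine span of `A`
and `(lin₀ A)^⊥ = {x* : x* = 0 on lin₀ A}`. -/
theorem stmt5 [FiniteDimensional ℝ X] [Nontrivial X]
    (A : Set X) (hA : A.Nonempty) (hAclosed : IsClosed A)
    (hpointed : recessionCone (closure (convexHull ℝ A)) ∩
      (-(recessionCone (closure (convexHull ℝ A)))) = {0})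
    (hdiff : ∀ f : X →L[ℝ] ℝ, (subdiff A f).Nonempty →
      ¬ (∀ x ∈ (affineSpan ℝ A).direction, f x = 0) → SigmaDiffAt A f) :
    intrinsicFrontier ℝ (closure (convexHull ℝ A)) ⊆ A :=
  stmt5_general A hAclosed hdiff
end

section
/- Let X be a finite-dimensional real normed space and let K, A ⊂ X satisfy condition (H), and let F_A : K → ℝ₊ be defined by F_A(x) := max{t ≥ 0 : x ∈ tA} (with the convention 0·A := K). Then for every γ ≥ 0 one has {x ∈ K : F_A(x) ≥ γ} = γA (where 0·A = K), and consequently F_A is upper semicontinuous on K. Moreover F_A is positively homogeneous (F_A(tx) = tF_A(x) for x ∈ K, t ≥ 0), x ∈ F_A(x)·A for every x ∈ K, and int K ⊂ {tx : t > 0, x ∈ A} = {x ∈ K : F_A(x) > 0}. -/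
/-!
Since `A + K = A` and `A ⊆ K`, the ray `{c • a : c ≥ 1}` stays in `A` for every `a ∈ A`, so
`x ∈ tA` persists when `t > 0` decreases. As `A` is closed and misses `0`, it keeps a positive
distance from the origin, which bounds `{t : x ∈ tA}`; closedness of `A` again makes the
supremum attained. The superlevel sets of `F_A` are therefore the closed sets `γA`, and
homogeneity is `sSup (t • S) = t • sSup S`. Finally, for `x ∈ int K` and `a ∈ A` we have
`x - εa ∈ K` for small `ε > 0`, whence `x ∈ ε(A + K) = εA`.
-/

open Set Filter Topology Pointwise

variable {X : Type*} [NormedAddCommGroup X] [NormedSpace ℝ X]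

/-- The set `t·A`, with the convention `0·A := K`. -/
noncomputable def scaled (K A : Set X) (t : ℝ) : Set X := if t = 0 then K else t • A

/-- `F_A(x) := max {t ≥ 0 : x ∈ tA}` (with the convention `0·A := K`), realized as a
supremum; under condition (H) the set `{t ≥ 0 : x ∈ tA}` is a compact interval
containing `0`, so the supremum is a maximum. -/
noncomputable def FA (K A : Set X) (x : X) : ℝ :=
  sSup {t : ℝ | 0 ≤ t ∧ x ∈ scaled K A t}

/-- `ℙA = {t • a : t > 0, a ∈ A}`. -/
def posScaled (A : Set X) : Set X := {x | ∃ t : ℝ, 0 < t ∧ ∃ a ∈ A, x = t • a}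

lemma exists_pos_le_norm_of_isClosed {E : Type*} [SeminormedAddCommGroup E] {A : Set E}
    (hA : IsClosed A) (h0 : (0 : E) ∉ A) : ∃ δ > 0, ∀ a ∈ A, δ ≤ ‖a‖ := by
  obtain ⟨δ, hδ, hball⟩ := Metric.mem_nhds_iff.1 (hA.isOpen_compl.mem_nhds h0)
  exact ⟨δ, hδ, fun a ha => not_lt.1 fun h => hball (mem_ball_zero_iff.2 h) ha⟩

section

variable {K A : Set X} {x : X} {s t : ℝ}

lemma scaled_zero : scaled K A 0 = K := if_pos rfl

lemma scaled_of_ne_zero (ht : t ≠ 0) : scaled K A t = t • A := if_neg ht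

lemma mem_scaled_iff (ht : t ≠ 0) : x ∈ scaled K A t ↔ t⁻¹ • x ∈ A := by
  rw [scaled_of_ne_zero ht, mem_smul_set_iff_inv_smul_mem₀ ht]

lemma scaled_subset_of_nonneg (hK : ∀ t : ℝ, 0 ≤ t → ∀ x ∈ K, t • x ∈ K) (hAsub : A ⊆ K)
    (ht : 0 ≤ t) : scaled K A t ⊆ K := by
  rcases ht.eq_or_lt with rfl | ht
  · rw [scaled_zero]
  · rw [scaled_of_ne_zero ht.ne']
    rintro _ ⟨a, ha, rfl⟩
    exact hK t ht.le a (hAsub ha)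

lemma smul_mem_of_one_le (hK : ∀ t : ℝ, 0 ≤ t → ∀ x ∈ K, t • x ∈ K) (hAK : A + K = A)
    (hAsub : A ⊆ K) {a : X} (ha : a ∈ A) {c : ℝ} (hc : 1 ≤ c) : c • a ∈ A := by
  rw [show c • a = a + (c - 1) • a by rw [sub_smul, one_smul, add_sub_cancel], ← hAK]
  exact add_mem_add ha (hK _ (sub_nonneg.2 hc) a (hAsub ha))

lemma mem_scaled_of_le (hup : ∀ a ∈ A, ∀ c : ℝ, 1 ≤ c → c • a ∈ A) (hs : 0 < s) (hst : s ≤ t)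
    (hx : x ∈ scaled K A t) : x ∈ scaled K A s := by
  have ht := hs.trans_le hst
  rw [mem_scaled_iff ht.ne'] at hx
  rw [mem_scaled_iff hs.ne', show s⁻¹ • x = (t / s) • t⁻¹ • x by
    rw [smul_smul]; field_simp]
  exact hup _ hx _ ((one_le_div hs).2 hst)

lemma bddAbove_setOf_mem_scaled (hA : IsClosed A) (h0 : (0 : X) ∉ A) (x : X) :
    BddAbove {t : ℝ | 0 ≤ t ∧ x ∈ scaled K A t} := by
  obtain ⟨δ, hδ, hδA⟩ := exists_pos_le_norm_of_isClosed hA h0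
  refine ⟨‖x‖ / δ, fun t ⟨ht, hx⟩ => ?_⟩
  rcases ht.eq_or_lt with rfl | ht
  · positivity
  · have hδx := hδA _ ((mem_scaled_iff ht.ne').1 hx)
    rw [norm_smul, norm_inv, Real.norm_of_nonneg ht.le, le_inv_mul_iff₀ ht] at hδx
    rwa [le_div_iff₀ hδ]

lemma FA_nonneg (K A : Set X) (x : X) : 0 ≤ FA K A x := Real.sSup_nonneg fun _ ht => ht.1

lemma le_FA (hA : IsClosed A) (h0 : (0 : X) ∉ A) (ht : 0 ≤ t) (hx : x ∈ scaled K A t) :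
    t ≤ FA K A x :=
  le_csSup (bddAbove_setOf_mem_scaled hA h0 x) ⟨ht, hx⟩

lemma mem_scaled_FA (hA : IsClosed A) (hup : ∀ a ∈ A, ∀ c : ℝ, 1 ≤ c → c • a ∈ A)
    (hx : x ∈ K) : x ∈ scaled K A (FA K A x) := by
  rcases (FA_nonneg K A x).eq_or_lt with hF | hF
  · rwa [← hF, scaled_zero]
  rw [mem_scaled_iff hF.ne']
  have hne : {t : ℝ | 0 ≤ t ∧ x ∈ scaled K A t}.Nonempty := ⟨0, le_rfl, by rwa [scaled_zero]⟩
  have hbelow : ∀ᶠ s in 𝓝[<] FA K A x, s⁻¹ • x ∈ A := by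
    filter_upwards [Ioo_mem_nhdsLT hF] with s ⟨hs, hsF⟩
    obtain ⟨t, ⟨-, ht⟩, hst⟩ := exists_lt_of_lt_csSup hne hsF
    exact (mem_scaled_iff hs.ne').1 (mem_scaled_of_le hup hs hst.le ht)
  have hlim : Tendsto (fun s : ℝ => s⁻¹ • x) (𝓝[<] FA K A x) (𝓝 ((FA K A x)⁻¹ • x)) :=
    ((continuousAt_inv₀ hF.ne').smul continuousAt_const).tendsto.mono_left nhdsWithin_le_nhds
  exact hA.mem_of_tendsto hlim hbelow

lemma setOf_le_FA_eq_scaled (hK : ∀ t : ℝ, 0 ≤ t → ∀ x ∈ K, t • x ∈ K) (hAsub : A ⊆ K)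
    (hA : IsClosed A) (h0 : (0 : X) ∉ A) (hup : ∀ a ∈ A, ∀ c : ℝ, 1 ≤ c → c • a ∈ A)
    (ht : 0 ≤ t) : {x ∈ K | t ≤ FA K A x} = scaled K A t := by
  rcases ht.eq_or_lt with rfl | ht
  · rw [scaled_zero]
    exact sep_eq_self_iff_mem_true.2 fun x _ => FA_nonneg K A x
  ext x
  exact ⟨fun ⟨hxK, htx⟩ => mem_scaled_of_le hup ht htx (mem_scaled_FA hA hup hxK),
    fun hx => ⟨scaled_subset_of_nonneg hK hAsub ht.le hx, le_FA hA h0 ht.le hx⟩⟩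

lemma upperSemicontinuousOn_FA (hK : ∀ t : ℝ, 0 ≤ t → ∀ x ∈ K, t • x ∈ K) (hAsub : A ⊆ K)
    (hA : IsClosed A) (h0 : (0 : X) ∉ A) (hup : ∀ a ∈ A, ∀ c : ℝ, 1 ≤ c → c • a ∈ A) :
    UpperSemicontinuousOn (FA K A) K := by
  refine upperSemicontinuousOn_iff_preimage_Ici.2 fun t => ?_
  rcases le_or_gt t 0 with ht | ht
  · refine ⟨univ, isClosed_univ, ?_⟩
    ext x
    simp [ht.trans (FA_nonneg K A x)]
  · refine ⟨scaled K A t, ?_, ?_⟩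
    · rw [scaled_of_ne_zero ht.ne']
      exact hA.smul_of_ne_zero ht.ne'
    · rw [← setOf_le_FA_eq_scaled hK hAsub hA h0 hup ht.le]
      ext x
      simp +contextual

lemma smul_mem_scaled_mul_iff (hK : ∀ t : ℝ, 0 ≤ t → ∀ x ∈ K, t • x ∈ K) (ht : 0 < t) :
    t • x ∈ scaled K A (t * s) ↔ x ∈ scaled K A s := by
  rcases eq_or_ne s 0 with rfl | hs
  · rw [mul_zero, scaled_zero]
    refine ⟨fun h => ?_, hK t ht.le x⟩
    simpa [ht.ne'] using hK t⁻¹ (inv_nonneg.2 ht.le) _ h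
  · rw [scaled_of_ne_zero (mul_ne_zero ht.ne' hs), scaled_of_ne_zero hs, mul_smul,
      smul_mem_smul_set_iff₀ ht.ne']

lemma FA_smul_of_pos (hK : ∀ t : ℝ, 0 ≤ t → ∀ x ∈ K, t • x ∈ K) (ht : 0 < t) (x : X) :
    FA K A (t • x) = t * FA K A x := by
  have hset : {s : ℝ | 0 ≤ s ∧ t • x ∈ scaled K A s} = t • {s | 0 ≤ s ∧ x ∈ scaled K A s} := by
    ext s
    rw [mem_smul_set_iff_inv_smul_mem₀ ht.ne', smul_eq_mul]
    refine (mul_nonneg_iff_of_pos_left (inv_pos.2 ht)).symm.and ?_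
    simpa only [mul_inv_cancel_left₀ ht.ne'] using smul_mem_scaled_mul_iff hK ht (s := t⁻¹ * s)
  rw [FA, FA, hset, Real.sSup_smul_of_nonneg ht.le, smul_eq_mul]

lemma FA_zero (h0 : (0 : X) ∉ A) : FA K A 0 = 0 :=
  le_antisymm (Real.sSup_nonpos fun t ⟨_, ht⟩ => not_lt.1 fun hpos => h0 <| by
    rwa [mem_scaled_iff hpos.ne', smul_zero] at ht) (FA_nonneg K A 0)

lemma FA_smul (hK : ∀ t : ℝ, 0 ≤ t → ∀ x ∈ K, t • x ∈ K) (h0 : (0 : X) ∉ A) (ht : 0 ≤ t)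
    (x : X) : FA K A (t • x) = t * FA K A x := by
  rcases ht.eq_or_lt with rfl | ht
  · rw [zero_smul, zero_mul, FA_zero h0]
  · exact FA_smul_of_pos hK ht x

lemma interior_subset_posScaled (hK : ∀ t : ℝ, 0 ≤ t → ∀ x ∈ K, t • x ∈ K) (hAK : A + K = A)
    (hAne : A.Nonempty) : interior K ⊆ posScaled A := by
  intro x hx
  obtain ⟨a, ha⟩ := hAne
  have hcont : Continuous fun ε : ℝ => x - ε • a := by fun_prop
  have hlim : Tendsto (fun ε : ℝ => x - ε • a) (𝓝 0) (𝓝 x) := hcont.tendsto' 0 x (by simp)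
  have hnear : ∀ᶠ ε in 𝓝[>] (0 : ℝ), x - ε • a ∈ K :=
    nhdsWithin_le_nhds (hlim.eventually (mem_interior_iff_mem_nhds.1 hx))
  obtain ⟨ε, hεK, hε⟩ := (hnear.and self_mem_nhdsWithin).exists
  refine ⟨ε, hε, a + ε⁻¹ • (x - ε • a), ?_, ?_⟩
  · rw [← hAK]
    exact add_mem_add ha (hK _ (inv_nonneg.2 hε.le) _ hεK)
  · rw [smul_add, smul_inv_smul₀ hε.ne']
    abel

lemma posScaled_eq_setOf_FA_pos (hK : ∀ t : ℝ, 0 ≤ t → ∀ x ∈ K, t • x ∈ K) (hAsub : A ⊆ K)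
    (hA : IsClosed A) (h0 : (0 : X) ∉ A) (hup : ∀ a ∈ A, ∀ c : ℝ, 1 ≤ c → c • a ∈ A) :
    posScaled A = {x ∈ K | 0 < FA K A x} := by
  ext x
  constructor
  · rintro ⟨t, ht, a, ha, rfl⟩
    have hmem : t • a ∈ scaled K A t := by
      rw [scaled_of_ne_zero ht.ne']
      exact smul_mem_smul_set ha
    exact ⟨scaled_subset_of_nonneg hK hAsub ht.le hmem, ht.trans_le (le_FA hA h0 ht.le hmem)⟩
  · rintro ⟨hxK, hF⟩
    have hx := (mem_scaled_iff hF.ne').1 (mem_scaled_FA hA hup hxK)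
    exact ⟨_, hF, _, hx, (smul_inv_smul₀ hF.ne' x).symm⟩

end

theorem stmt13_general
    (K A : Set X)
    (hKcone : ∀ t : ℝ, 0 ≤ t → ∀ x ∈ K, t • x ∈ K)
    (hAne : A.Nonempty) (hAclosed : IsClosed A)
    (hAK : A + K = A) (hAsub : A ⊆ K \ {0}) :
    (∀ γ : ℝ, 0 ≤ γ → {x ∈ K | γ ≤ FA K A x} = scaled K A γ) ∧
    UpperSemicontinuousOn (FA K A) K ∧
    (∀ x ∈ K, ∀ t : ℝ, 0 ≤ t → FA K A (t • x) = t * FA K A x) ∧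
    (∀ x ∈ K, x ∈ scaled K A (FA K A x)) ∧
    interior K ⊆ posScaled A ∧
    posScaled A = {x ∈ K | 0 < FA K A x} := by
  have hAK' : A ⊆ K := fun a ha => (hAsub ha).1
  have h0 : (0 : X) ∉ A := fun h => (hAsub h).2 rfl
  have hup : ∀ a ∈ A, ∀ c : ℝ, 1 ≤ c → c • a ∈ A := fun _ ha _ hc =>
    smul_mem_of_one_le hKcone hAK hAK' ha hc
  exact ⟨fun _ hγ => setOf_le_FA_eq_scaled hKcone hAK' hAclosed h0 hup hγ,
    upperSemicontinuousOn_FA hKcone hAK' hAclosed h0 hup,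
    fun x _ _ ht => FA_smul hKcone h0 ht x,
    fun _ hx => mem_scaled_FA hAclosed hup hx,
    interior_subset_posScaled hKcone hAK hAne,
    posScaled_eq_setOf_FA_pos hKcone hAK' hAclosed h0 hup⟩

/-- Let `K, A` satisfy condition (H) in a finite-dimensional real normed
space. Then `{x ∈ K : F_A x ≥ γ} = γA` for all `γ ≥ 0`, `F_A` is upper semicontinuous on
`K`, `F_A` is positively homogeneous, `x ∈ F_A(x)·A` for every `x ∈ K`, and
`int K ⊆ ℙA = {x ∈ K : F_A x > 0}`. -/
theorem stmt13 [FiniteDimensional ℝ X] [Nontrivial X]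
    (hdim : 2 ≤ Module.finrank ℝ X)
    (K A : Set X)
    (hKconv : Convex ℝ K) (hKclosed : IsClosed K)
    (hKcone : ∀ t : ℝ, 0 ≤ t → ∀ x ∈ K, t • x ∈ K)
    (hKpointed : K ∩ (-K) = {0}) (hKint : (interior K).Nonempty)
    (hAne : A.Nonempty) (hAclosed : IsClosed A)
    (hAK : A + K = A) (hAsub : A ⊆ K \ {0}) :
    (∀ γ : ℝ, 0 ≤ γ → {x ∈ K | γ ≤ FA K A x} = scaled K A γ) ∧
    UpperSemicontinuousOn (FA K A) K ∧
    (∀ x ∈ K, ∀ t : ℝ, 0 ≤ t → FA K A (t • x) = t * FA K A x) ∧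
    (∀ x ∈ K, x ∈ scaled K A (FA K A x)) ∧
    interior K ⊆ posScaled A ∧
    posScaled A = {x ∈ K | 0 < FA K A x} :=
  stmt13_general K A hKcone hAne hAclosed hAK hAsub
end

section
/- Let X be a finite-dimensional real normed space, C ⊂ X a closed convex set, and x₀ ∈ C such that the cone ℝ₊(C − x₀) := {t(c − x₀) : t ≥ 0, c ∈ C} is not closed. Then there exists a sequence (xₙ) converging to x₀ such that for all n ≥ 1 and all λ ∈ (0,1), xₙ ∈ C and xₙ ∉ (1−λ)x₀ + λC. -/
/-!
Since `ℝ₊(C - x₀)` is a cone, so is its closure; hence a point of the closure outside the cone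
can be rescaled to be arbitrarily short, and it is then approximated by short cone vectors
`v = t • (c - x₀)` with `x₀ + v ∉ C`. Walking from `x₀` through `c` in direction `c - x₀`, the
last point `e` of the ray in `C` exists (closedness) and lies between `c` and `x₀ + v`
(star-convexity), so `‖e - x₀‖ ≤ ‖v‖`. Being the last point of its ray, `e` is not of the form
`(1 - λ) x₀ + λ c'` with `c' ∈ C` and `λ ∈ (0,1)`, since then `c'` would lie further out.
-/

open Set Filter Topology Pointwise

section Ray

variable {E : Type*} [AddCommGroup E] [Module ℝ E] {C : Set E} {x₀ d : E}

theorem notMem_homothety_image_of_forall_gt_notMem {σ l : ℝ} (hσ : 0 < σ)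
    (hmax : ∀ r > σ, x₀ + r • d ∉ C) (hl : l ∈ Ioo (0 : ℝ) 1) :
    x₀ + σ • d ∉ (fun c => (1 - l) • x₀ + l • c) '' C := by
  rintro ⟨c, hc, hce⟩
  have hc_eq : c = x₀ + (σ / l) • d := by
    apply smul_right_injective E hl.1.ne'
    simp only [smul_add, smul_smul, mul_div_cancel₀ _ hl.1.ne']
    linear_combination (norm := module) hce
  exact hmax (σ / l) ((lt_div_iff₀ hl.1).2 (by nlinarith [hl.2])) (hc_eq ▸ hc)

variable [TopologicalSpace E] [ContinuousAdd E] [ContinuousSMul ℝ E]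

theorem exists_last_mem_ray (hC : IsClosed C) (hstar : StarConvex ℝ x₀ C) (hd : x₀ + d ∈ C)
    {s : ℝ} (hs₀ : 0 ≤ s) (hs : x₀ + s • d ∉ C) :
    ∃ σ, 1 ≤ σ ∧ σ < s ∧ x₀ + σ • d ∈ C ∧ ∀ r > σ, x₀ + r • d ∉ C := by
  set S := {r : ℝ | 1 ≤ r ∧ x₀ + r • d ∈ C}
  have hS_lt : ∀ r ∈ S, r < s := by
    rintro r ⟨hr₁, hrC⟩
    by_contra! hsr
    refine hs ?_
    have hr₀ : 0 < r := zero_lt_one.trans_le hr₁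
    have := hstar.add_smul_mem hrC (div_nonneg hs₀ hr₀.le) ((div_le_one hr₀).2 hsr)
    rwa [smul_smul, div_mul_cancel₀ _ hr₀.ne'] at this
  have hS_closed : IsClosed S :=
    isClosed_Ici.inter (hC.preimage (by fun_prop))
  have hS_bdd : BddAbove S := ⟨s, fun r hr => (hS_lt r hr).le⟩
  have h1S : (1 : ℝ) ∈ S := ⟨le_rfl, by rwa [one_smul]⟩
  have hσS : sSup S ∈ S := hS_closed.csSup_mem ⟨1, h1S⟩ hS_bdd
  refine ⟨sSup S, hσS.1, hS_lt _ hσS, hσS.2, fun r hr hrC => ?_⟩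
  exact hr.not_ge (le_csSup hS_bdd ⟨hσS.1.trans hr.le, hrC⟩)

end Ray

section RadialCone

variable {E : Type*} [NormedAddCommGroup E] [NormedSpace ℝ E] {C : Set E} {x₀ v : E}

def radialCone (C : Set E) (x₀ : E) : Set E :=
  {y | ∃ t : ℝ, 0 ≤ t ∧ ∃ c ∈ C, y = t • (c - x₀)}

theorem smul_mem_radialCone (hv : v ∈ radialCone C x₀) {r : ℝ} (hr : 0 ≤ r) :
    r • v ∈ radialCone C x₀ := by
  obtain ⟨t, ht, c, hc, rfl⟩ := hv
  exact ⟨r * t, mul_nonneg hr ht, c, hc, by rw [smul_smul]⟩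

theorem mem_radialCone_of_add_mem (h : x₀ + v ∈ C) : v ∈ radialCone C x₀ :=
  ⟨1, zero_le_one, x₀ + v, h, by simp⟩

theorem exists_mem_radialCone_norm_lt_add_notMem (hC : IsClosed C) (hx₀ : x₀ ∈ C)
    (hnc : ¬ IsClosed (radialCone C x₀)) {ε : ℝ} (hε : 0 < ε) :
    ∃ v ∈ radialCone C x₀, ‖v‖ < ε ∧ x₀ + v ∉ C := by
  obtain ⟨y, hy, hyK⟩ : ∃ y ∈ closure (radialCone C x₀), y ∉ radialCone C x₀ :=
    not_subset.1 (mt closure_subset_iff_isClosed.1 hnc)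
  have hy₀ : 0 < ‖y‖ := norm_pos_iff.2 fun h =>
    hyK (h ▸ mem_radialCone_of_add_mem (by rwa [add_zero]))
  set r := ε / (2 * ‖y‖)
  have hr : 0 < r := by positivity
  have hry : r • y ∈ closure (radialCone C x₀) :=
    map_mem_closure (continuous_const_smul r) hy fun _ hv => smul_mem_radialCone hv hr.le
  have hryK : r • y ∉ radialCone C x₀ := fun h =>
    hyK (by simpa [smul_smul, hr.ne'] using smul_mem_radialCone h (inv_nonneg.2 hr.le))
  have hry_norm : ‖r • y‖ < ε := by
    rw [norm_smul, Real.norm_of_nonneg hr.le, div_mul_eq_mul_div, mul_div_mul_right _ _ hy₀.ne']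
    linarith
  have hU : IsOpen ({w | x₀ + w ∉ C} ∩ Metric.ball 0 ε) :=
    (hC.isOpen_compl.preimage (by fun_prop)).inter Metric.isOpen_ball
  obtain ⟨v, ⟨hvC, hvε⟩, hvK⟩ := mem_closure_iff.1 hry _ hU
    ⟨fun h => hryK (mem_radialCone_of_add_mem h), mem_ball_zero_iff.2 hry_norm⟩
  exact ⟨v, hvK, mem_ball_zero_iff.1 hvε, hvC⟩

theorem exists_notMem_homothety_image_of_mem_radialCone (hC : IsClosed C)
    (hstar : StarConvex ℝ x₀ C) (hv : v ∈ radialCone C x₀) (hvC : x₀ + v ∉ C) :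
    ∃ e ∈ C, ‖e - x₀‖ ≤ ‖v‖ ∧ ∀ l ∈ Ioo (0 : ℝ) 1, e ∉ (fun c => (1 - l) • x₀ + l • c) '' C := by
  obtain ⟨t, ht, c, hc, rfl⟩ := hv
  obtain ⟨σ, hσ₁, hσt, hσC, hmax⟩ :=
    exists_last_mem_ray hC hstar (d := c - x₀) (by rwa [add_sub_cancel]) ht hvC
  have hσ₀ : 0 < σ := zero_lt_one.trans_le hσ₁
  refine ⟨x₀ + σ • (c - x₀), hσC, ?_,
    fun l hl => notMem_homothety_image_of_forall_gt_notMem hσ₀ hmax hl⟩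
  rw [add_sub_cancel_left, norm_smul, norm_smul, Real.norm_of_nonneg hσ₀.le,
    Real.norm_of_nonneg ht]
  gcongr

theorem mem_closure_setOf_notMem_homothety_image (hC : IsClosed C) (hstar : StarConvex ℝ x₀ C)
    (hx₀ : x₀ ∈ C) (hnc : ¬ IsClosed (radialCone C x₀)) :
    x₀ ∈ closure {e ∈ C | ∀ l ∈ Ioo (0 : ℝ) 1, e ∉ (fun c => (1 - l) • x₀ + l • c) '' C} := by
  refine Metric.mem_closure_iff.2 fun ε hε => ?_
  obtain ⟨v, hvK, hvε, hvC⟩ := exists_mem_radialCone_norm_lt_add_notMem hC hx₀ hnc hε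
  obtain ⟨e, heC, hev, he⟩ := exists_notMem_homothety_image_of_mem_radialCone hC hstar hvK hvC
  exact ⟨e, ⟨heC, he⟩, by rw [dist_comm, dist_eq_norm]; linarith⟩

end RadialCone

theorem stmt17_general {X : Type*} [NormedAddCommGroup X] [NormedSpace ℝ X]
    (C : Set X) (hCclosed : IsClosed C) (hCconv : Convex ℝ C)
    (x₀ : X) (hx₀ : x₀ ∈ C)
    (hnc : ¬ IsClosed {y : X | ∃ t : ℝ, 0 ≤ t ∧ ∃ c ∈ C, y = t • (c - x₀)}) :
    ∃ x : ℕ → X, Filter.Tendsto x Filter.atTop (𝓝 x₀) ∧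
      ∀ n : ℕ, x n ∈ C ∧
        ∀ l : ℝ, l ∈ Ioo (0 : ℝ) 1 → x n ∉ (fun c => (1 - l) • x₀ + l • c) '' C := by
  obtain ⟨x, hx, hlim⟩ := mem_closure_iff_seq_limit.1 <|
    mem_closure_setOf_notMem_homothety_image hCclosed (hCconv.starConvex hx₀) hx₀ hnc
  exact ⟨x, hlim, hx⟩

/-- Let `C` be a closed convex set in a nontrivial finite-dimensional
real normed space and `x₀ ∈ C` such that the cone `ℝ₊(C - x₀)` is not closed. Then there
is a sequence `(xₙ)` converging to `x₀` with `xₙ ∈ C` and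
`xₙ ∉ (1 - λ)x₀ + λC` for all `n` and all `λ ∈ (0,1)`. -/
theorem stmt17 {X : Type*} [NormedAddCommGroup X] [NormedSpace ℝ X]
    [FiniteDimensional ℝ X] [Nontrivial X]
    (C : Set X) (hCclosed : IsClosed C) (hCconv : Convex ℝ C)
    (x₀ : X) (hx₀ : x₀ ∈ C)
    (hnc : ¬ IsClosed {y : X | ∃ t : ℝ, 0 ≤ t ∧ ∃ c ∈ C, y = t • (c - x₀)}) :
    ∃ x : ℕ → X, Filter.Tendsto x Filter.atTop (𝓝 x₀) ∧
      ∀ n : ℕ, x n ∈ C ∧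
        ∀ l : ℝ, l ∈ Ioo (0 : ℝ) 1 → x n ∉ (fun c => (1 - l) • x₀ + l • c) '' C :=
  stmt17_general C hCclosed hCconv x₀ hx₀ hnc
end
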